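/- arXiv:0807.1277 — 7 statements merged into one kernel-verified Lean document; each statement's English description precedes it below -/
import Mathlib

section
/- Let G be a graph whose nodes are equipped with distinct weights. For any set of nodes Z, the set IB(Z) of all nodes z such that there exists a weight-increasing path z_1, ..., z_k with z_1 ∈ Z and z_k = z is an influence blocking subgraph containing Z, and it is contained in every influence blocking subgraph containing Z (i.e., it is the unique minimal one). -/
variable {V : Type*}

/-- There is a weight-increasing path in `G` from (some node of) `Z` to `z`. -/
def IsIncPathFrom (G : SimpleGraph V) (w : V → ℝ) (Z : Set V) (z : V) : Prop :=
  ∃ n : ℕ, ∃ p : Fin (n + 1) → V,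
    p 0 ∈ Z ∧ p (Fin.last n) = z ∧
    (∀ i : Fin n, G.Adj (p i.castSucc) (p i.succ)) ∧ StrictMono (w ∘ p)

/-- `IB(Z)`: the set of nodes reachable from `Z` by a weight-increasing path. -/
def IB (G : SimpleGraph V) (w : V → ℝ) (Z : Set V) : Set V :=
  {z | IsIncPathFrom G w Z z}

/-- `H` is an influence blocking subgraph: every node of `H` has weight strictly larger
than all of its neighbors outside `H`. -/
def IsIBS (G : SimpleGraph V) (w : V → ℝ) (H : Set V) : Prop :=
  ∀ z ∈ H, ∀ y, G.Adj z y → y ∉ H → w y < w z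

/-! A node of `IB(Z)` with a heavier neighbour passes that neighbour into `IB(Z)` by extending
its path, and with distinct weights this is exactly the blocking property. Conversely, along a
weight-increasing path from `Z ⊆ H` an influence blocking `H` can never be left, since the next
node would be a heavier neighbour outside `H`. -/

section

variable {G : SimpleGraph V} {w : V → ℝ} {Z : Set V}

theorem self_subset_IB : Z ⊆ IB G w Z := fun z hz =>
  ⟨0, fun _ => z, hz, rfl, Fin.elim0, Subsingleton.strictMono (α := Fin 1) _⟩

theorem mem_IB_of_adj_of_lt {z y : V} (hz : z ∈ IB G w Z) (hadj : G.Adj z y)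
    (hlt : w z < w y) : y ∈ IB G w Z := by
  obtain ⟨n, p, h0, rfl, hpath, hmono⟩ := hz
  refine ⟨n + 1, Fin.snoc p y, by simpa using h0, by simp, fun i => ?_, ?_⟩
  · induction i using Fin.lastCases with
    | last => simpa using hadj
    | cast j => simpa only [Fin.succ_castSucc, Fin.snoc_castSucc] using hpath j
  · refine Fin.strictMono_iff_lt_succ.mpr fun i => ?_
    induction i using Fin.lastCases with
    | last => simpa using hlt
    | cast j =>
      simpa only [Fin.succ_castSucc, Fin.snoc_castSucc, Function.comp_apply]
        using hmono j.castSucc_lt_succ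

theorem isIBS_IB (hw : Function.Injective w) : IsIBS G w (IB G w Z) := by
  intro z hz y hadj hy
  rcases lt_trichotomy (w y) (w z) with hlt | heq | hgt
  · exact hlt
  · exact absurd (hw heq) hadj.ne'
  · exact absurd (mem_IB_of_adj_of_lt hz hadj hgt) hy

theorem IsIBS.IB_subset {H : Set V} (hH : IsIBS G w H) (hZH : Z ⊆ H) : IB G w Z ⊆ H := by
  rintro _ ⟨n, p, h0, rfl, hpath, hmono⟩
  suffices ∀ i, p i ∈ H from this _
  intro i
  induction i using Fin.induction with
  | zero => exact hZH h0
  | succ j ih =>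
    by_contra hout
    exact (hH _ ih _ (hpath j) hout).not_gt (hmono j.castSucc_lt_succ)

end

/-- `IB(Z)` is an influence blocking subgraph containing `Z`, and it is contained in
every influence blocking subgraph containing `Z` (it is the unique minimal one). -/
theorem IB_minimal_ibs (G : SimpleGraph V) (w : V → ℝ) (hw : Function.Injective w)
    (Z : Set V) :
    Z ⊆ IB G w Z ∧ IsIBS G w (IB G w Z) ∧
      ∀ H : Set V, IsIBS G w H → Z ⊆ H → IB G w Z ⊆ H := by
  exact ⟨self_subset_IB, isIBS_IB hw, fun _ hH hZH => hH.IB_subset hZH⟩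
end

section
/- Let G be a graph with distinct node weights and let H be an influence blocking subgraph of G. Then the independent set produced by the greedy algorithm (which repeatedly picks the heaviest remaining node, adds it, and deletes its neighbors) on G, intersected with the nodes of H, equals the independent set produced by the greedy algorithm on H with the induced weights. -/
variable {V : Type*}

/-- Membership in the independent set produced by the greedy algorithm run on the subgraph of
`G` induced by `S` (repeatedly pick the heaviest remaining node, add it, delete its
neighbors): a node `v ∈ S` is selected iff no heavier neighbor of `v` inside `S` is
selected. -/
def greedyMemOn [Fintype V] (G : SimpleGraph V) (w : V → ℝ) (S : Set V) (v : V) : Prop :=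
  v ∈ S ∧ ∀ u, u ∈ S → G.Adj u v → w v < w u → ¬ greedyMemOn G w S u
termination_by (Finset.univ.filter fun x => w v < w x).card
decreasing_by
  rename_i hu hadj hlt
  apply Finset.card_lt_card
  constructor
  · intro x hx
    simp only [Finset.mem_filter, Finset.mem_univ, true_and] at *
    exact lt_trans hlt hx
  · intro hsub
    have hu' : u ∈ Finset.univ.filter fun x => w v < w x := by simp [hlt]
    have := hsub hu'
    simp at this


lemma greedy_key [Fintype V] (G : SimpleGraph V) (w : V → ℝ) (H : Set V) (hH : IsIBS G w H)
    (v : V) (hv : v ∈ H) : greedyMemOn G w Set.univ v ↔ greedyMemOn G w H v := by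
  rw [greedyMemOn, greedyMemOn]
  constructor
  · rintro ⟨-, h⟩
    refine ⟨hv, fun u hu hadj hlt hgu => ?_⟩
    exact h u trivial hadj hlt ((greedy_key G w H hH u hu).mpr hgu)
  · rintro ⟨-, h⟩
    refine ⟨trivial, fun u _ hadj hlt hgu => ?_⟩
    by_cases huH : u ∈ H
    · exact h u huH hadj hlt ((greedy_key G w H hH u huH).mp hgu)
    · exact absurd hlt (not_lt.2 (le_of_lt (hH v hv u hadj.symm huH)))
termination_by (Finset.univ.filter fun x => w v < w x).card
decreasing_by
  all_goals {
    apply Finset.card_lt_card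
    constructor
    · intro x hx
      simp only [Finset.mem_filter, Finset.mem_univ, true_and] at *
      exact lt_trans hlt hx
    · intro hsub
      have hu' : u ∈ Finset.univ.filter fun x => w v < w x := by simp [hlt]
      have := hsub hu'
      simp at this }

/-- If `H` is an influence blocking subgraph of `G` (with distinct node weights), then the
greedy independent set of `G` intersected with `H` equals the greedy independent set of `H`
with the induced weights. -/
theorem greedy_respects_ibs [Fintype V] (G : SimpleGraph V) (w : V → ℝ)
    (hw : Function.Injective w) (H : Set V) (hH : IsIBS G w H) :
    {v | greedyMemOn G w Set.univ v} ∩ H = {v | greedyMemOn G w H v} := by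
  ext v
  simp only [Set.mem_inter_iff, Set.mem_setOf_eq]
  constructor
  · rintro ⟨hg, hv⟩
    exact (greedy_key G w H hH v hv).mp hg
  · intro hg
    have hg' := hg
    rw [greedyMemOn] at hg'
    have hv : v ∈ H := hg'.1
    exact ⟨(greedy_key G w H hH v hv).mpr hg, hv⟩
end

section
/- Let T be a rooted tree with distinct positive node weights, and define the bonus S(i) recursively by S(i) = W_i if i is a leaf, and S(i) = W_i · 1{W_i > max over children j of S(j)} otherwise. Then for every node i, S(i) = W_i · 1{i belongs to the greedy independent set of the subtree T_i rooted at i}. -/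
/-!
Let `c` be a child of the root of `T` with `W_root < W_c`. The only node of `T` adjacent to the
subtree `T_c` from outside is the root, which is lighter than `c` and so never blocks a node of
`T_c`; hence greedy on `T` restricted to `T_c` is greedy on `T_c`. The root is therefore selected
iff no heavier child is selected in its own subtree. By induction, a child's bonus is `W_c` if `c`
is selected in `T_c` and `0` otherwise; as weights are positive and adjacent weights differ, all
children's bonuses are below `W_root` exactly when the root is selected.
-/

open scoped Classical

/-- Finite rooted trees with real node weights. -/
inductive WTree : Type
  | node : ℝ → List WTree → WTree

namespace WTree

/-- The weight of the root. -/
def wt : WTree → ℝ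
  | node w _ => w

/-- The children subtrees of the root. -/
def children : WTree → List WTree
  | node _ cs => cs

/-- The bonus `S`: `S(i) = W_i` for a leaf, and
`S(i) = W_i · 1{W_i > max over children j of S(j)}` otherwise. -/
noncomputable def bonus : WTree → ℝ
  | node w cs =>
    if cs = [] then w
    else if ((cs.attach.map fun c => bonus c.1).foldr max 0) < w then w else 0
decreasing_by
  all_goals
    have h1 := List.sizeOf_lt_of_mem c.2
    simp only [WTree.node.sizeOf_spec]
    omega

end WTree

namespace WTree

/-- The subtree at a given address (sequence of child indices), if it exists. -/
def subtreeAt : WTree → List ℕ → Option WTree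
  | t, [] => some t
  | node _ cs, i :: p =>
    match cs[i]? with
    | some c => subtreeAt c p
    | none => none
termination_by _ p => p.length

/-- The list of addresses of all nodes of the tree. -/
def addrs : WTree → List (List ℕ)
  | node _ cs =>
    [] :: (List.range cs.length).flatMap fun i =>
      match h : cs[i]? with
      | some c => (addrs c).map (i :: ·)
      | none => []
decreasing_by
  rename_i cs
  have hmem : c ∈ cs := by
    obtain ⟨hlt, rfl⟩ := List.getElem?_eq_some_iff.mp h
    exact List.getElem_mem hlt
  have h1 := List.sizeOf_lt_of_mem hmem
  simp only [WTree.node.sizeOf_spec]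
  omega

/-- `p` is (the address of) a node of `t`. -/
def isNode (t : WTree) (p : List ℕ) : Prop := (subtreeAt t p).isSome

/-- The weight of the node at address `p` (junk value `0` if there is no such node). -/
def wAt (t : WTree) (p : List ℕ) : ℝ :=
  match subtreeAt t p with
  | some s => s.wt
  | none => 0

/-- Two addresses are adjacent in the tree iff one is the parent of the other. -/
def adjAddr (p q : List ℕ) : Prop :=
  (∃ i, q = p ++ [i]) ∨ ∃ i, p = q ++ [i]

end WTree

/-- Auxiliary counting lemma used for termination of the greedy recursion. -/
theorem List.countP_lt_countP {α : Type*} (l : List α) (P Q : α → Bool)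
    (hPQ : ∀ x, Q x = true → P x = true) {a : α} (ha : a ∈ l) (haP : P a = true)
    (haQ : Q a = false) : l.countP Q < l.countP P := by
  induction l with
  | nil => cases ha
  | cons b l ih =>
    rw [List.countP_cons, List.countP_cons]
    rcases List.mem_cons.mp ha with rfl | hb
    · rw [haP, haQ]
      have hle : l.countP Q ≤ l.countP P := List.countP_mono_left fun x _ hx => hPQ x hx
      simp only [Bool.false_eq_true, if_true, if_false]
      omega
    · have := ih hb
      by_cases hq : Q b = true
      · rw [hq, hPQ b hq]; omega
      · have hq' : Q b = false := by simpa using hq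
        rw [hq']
        by_cases hp : P b = true
        · rw [hp]; simp only [Bool.false_eq_true, if_false, if_true]; omega
        · have hp' : P b = false := by simpa using hp
          rw [hp']; omega

namespace WTree

/-- Membership of the node at address `p` in the independent set produced by the greedy
algorithm on the tree `t` (repeatedly pick the heaviest remaining node, add it, delete its
neighbors): a node is selected iff no heavier neighbor is selected. -/
def greedyMem (t : WTree) (p : List ℕ) : Prop :=
  isNode t p ∧ ∀ q, q ∈ addrs t → adjAddr p q → wAt t p < wAt t q → ¬ greedyMem t q
termination_by (addrs t).countP fun q => decide (wAt t p < wAt t q)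
decreasing_by
  rename_i hq hadj hlt
  exact List.countP_lt_countP (addrs t) _ _
    (fun x hx => by
      simp only [decide_eq_true_eq] at *
      exact lt_trans hlt hx) hq (by simpa using hlt) (by simp)

end WTree


namespace List

theorem foldr_max_lt_iff {α : Type*} [LinearOrder α] {l : List α} {a b : α} :
    l.foldr max a < b ↔ a < b ∧ ∀ x ∈ l, x < b := by
  induction l with
  | nil => simp
  | cons x l ih => simp only [foldr_cons, max_lt_iff, ih, forall_mem_cons]; tauto

@[elab_as_elim]
theorem induction_descending {α β : Type*} [Preorder β] (L : List α) (f : α → β)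
    {P : α → Prop} (step : ∀ a, (∀ b ∈ L, f a < f b → P b) → P a) (a : α) : P a :=
  (measure fun a => L.countP fun b => decide (f a < f b)).wf.induction a fun a ih =>
    step a fun b hb hab => ih b <| countP_lt_countP L _ _
      (fun x hx => by simpa using hab.trans (by simpa using hx)) hb (by simpa using hab) (by simp)

end List

namespace WTree

@[elab_as_elim]
theorem mem_induction {P : WTree → Prop} (step : ∀ w cs, (∀ c ∈ cs, P c) → P (node w cs)) :
    ∀ t, P t
  | node w cs => step w cs fun c _ => mem_induction step c

@[simp]
theorem wt_node (w : ℝ) (cs : List WTree) : (node w cs).wt = w := rfl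

theorem subtreeAt_nil (t : WTree) : t.subtreeAt [] = some t := by
  rw [subtreeAt]

theorem subtreeAt_node_cons (w : ℝ) (cs : List WTree) (i : ℕ) (p : List ℕ) :
    (node w cs).subtreeAt (i :: p) = cs[i]?.bind (subtreeAt · p) := by
  rw [subtreeAt]; cases cs[i]? <;> rfl

theorem subtreeAt_node_singleton (w : ℝ) (cs : List WTree) (i : ℕ) :
    (node w cs).subtreeAt [i] = cs[i]? := by
  simp [subtreeAt_node_cons, subtreeAt_nil]

theorem subtreeAt_append (t : WTree) (p q : List ℕ) :
    t.subtreeAt (p ++ q) = (t.subtreeAt p).bind (subtreeAt · q) := by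
  induction p generalizing t with
  | nil => simp [subtreeAt_nil]
  | cons i p ih => obtain ⟨w, cs⟩ := t; simp [subtreeAt_node_cons, ih, Option.bind_assoc]

theorem mem_addrs_iff {t : WTree} {p : List ℕ} : p ∈ t.addrs ↔ (t.subtreeAt p).isSome := by
  induction p generalizing t with
  | nil => obtain ⟨w, cs⟩ := t; simp [addrs, subtreeAt_nil]
  | cons i p ih =>
    obtain ⟨w, cs⟩ := t
    rw [addrs, subtreeAt_node_cons]
    simp only [List.mem_cons, reduceCtorEq, false_or, List.mem_flatMap, List.mem_range]
    constructor
    · rintro ⟨j, -, hmem⟩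
      split at hmem
      · next c hc =>
        simp only [List.mem_map, List.cons.injEq] at hmem
        obtain ⟨p, hp, rfl, rfl⟩ := hmem
        simpa [hc] using ih.mp hp
      · simp at hmem
    · cases hc : cs[i]? with
      | none => simp
      | some c =>
        intro hp
        refine ⟨i, (List.getElem?_eq_some_iff.mp hc).1, ?_⟩
        split <;> simp_all

theorem mem_addrs_of_subtreeAt {t s : WTree} {p : List ℕ} (hs : t.subtreeAt p = some s) :
    p ∈ t.addrs :=
  mem_addrs_iff.2 (by simp [hs])

theorem nil_mem_addrs (t : WTree) : [] ∈ t.addrs :=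
  mem_addrs_of_subtreeAt (subtreeAt_nil t)

theorem wAt_of_subtreeAt {t s : WTree} {p : List ℕ} (hs : t.subtreeAt p = some s) :
    t.wAt p = s.wt := by
  rw [wAt, hs]

theorem wAt_nil (t : WTree) : t.wAt [] = t.wt :=
  wAt_of_subtreeAt (subtreeAt_nil t)

section subtree

variable {t s : WTree} {p : List ℕ}

theorem subtreeAt_append_of_subtreeAt (hs : t.subtreeAt p = some s) (q : List ℕ) :
    t.subtreeAt (p ++ q) = s.subtreeAt q := by
  rw [subtreeAt_append, hs, Option.bind_some]

theorem append_mem_addrs_iff (hs : t.subtreeAt p = some s) {q : List ℕ} :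
    p ++ q ∈ t.addrs ↔ q ∈ s.addrs := by
  rw [mem_addrs_iff, mem_addrs_iff, subtreeAt_append_of_subtreeAt hs]

theorem wAt_append (hs : t.subtreeAt p = some s) (q : List ℕ) :
    t.wAt (p ++ q) = s.wAt q := by
  rw [wAt, wAt, subtreeAt_append_of_subtreeAt hs]

theorem cons_mem_addrs_iff {i : ℕ} (hc : t.subtreeAt [i] = some s) {q : List ℕ} :
    i :: q ∈ t.addrs ↔ q ∈ s.addrs :=
  append_mem_addrs_iff hc

theorem wAt_cons {i : ℕ} (hc : t.subtreeAt [i] = some s) (q : List ℕ) :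
    t.wAt (i :: q) = s.wAt q :=
  wAt_append hc q

end subtree

theorem adjAddr.ne {p q : List ℕ} (h : adjAddr p q) : p ≠ q := by
  rintro rfl
  rcases h with ⟨i, h⟩ | ⟨i, h⟩ <;> simpa using congrArg List.length h

theorem adjAddr.append_left {q r : List ℕ} (h : adjAddr q r) (p : List ℕ) :
    adjAddr (p ++ q) (p ++ r) := by
  rcases h with ⟨i, rfl⟩ | ⟨i, rfl⟩
  · exact Or.inl ⟨i, by simp⟩
  · exact Or.inr ⟨i, by simp⟩

theorem adjAddr_cons_iff {i : ℕ} {q r : List ℕ} :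
    adjAddr (i :: q) r ↔ (q = [] ∧ r = []) ∨ ∃ r', r = i :: r' ∧ adjAddr q r' := by
  cases r with
  | nil => simp [adjAddr]
  | cons j r => simp only [adjAddr, List.cons_append, List.cons.injEq]; grind

theorem greedyMem_cons {t c : WTree} {i : ℕ} (hc : t.subtreeAt [i] = some c) (hw : t.wt < c.wt)
    (q : List ℕ) : t.greedyMem (i :: q) ↔ c.greedyMem q := by
  induction q using List.induction_descending c.addrs c.wAt with
  | step q ih =>
    rw [greedyMem.eq_1 t, greedyMem.eq_1 c, isNode, isNode, ← mem_addrs_iff, ← mem_addrs_iff,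
      cons_mem_addrs_iff hc]
    refine and_congr Iff.rfl ⟨fun H r hr hqr hlt => ?_, fun H r hr hqr hlt => ?_⟩
    · rw [← ih r hr hlt]
      exact H (i :: r) ((cons_mem_addrs_iff hc).2 hr) (adjAddr_cons_iff.2 (.inr ⟨r, rfl, hqr⟩))
        (by rwa [wAt_cons hc, wAt_cons hc])
    · rcases adjAddr_cons_iff.1 hqr with ⟨rfl, rfl⟩ | ⟨r, rfl, hqr'⟩
      · rw [wAt_cons hc, wAt_nil, wAt_nil] at hlt
        exact absurd hw hlt.not_gt
      · rw [cons_mem_addrs_iff hc] at hr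
        rw [wAt_cons hc, wAt_cons hc] at hlt
        rw [ih r hr hlt]
        exact H r hr hqr' hlt

theorem greedyMem_node_nil_iff (w : ℝ) (cs : List WTree) :
    (node w cs).greedyMem [] ↔ ∀ c ∈ cs, w < c.wt → ¬ c.greedyMem [] := by
  rw [greedyMem]
  simp only [isNode, subtreeAt_nil, Option.isSome_some, true_and, wAt_nil]
  constructor
  · intro H c hc hw hg
    obtain ⟨i, hi⟩ := List.mem_iff_getElem?.1 hc
    rw [← subtreeAt_node_singleton] at hi
    exact H [i] (mem_addrs_of_subtreeAt hi) (.inl ⟨i, rfl⟩)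
      (by rwa [wAt_of_subtreeAt hi]) ((greedyMem_cons hi hw []).2 hg)
  · intro H r hr hadj hlt
    obtain ⟨i, rfl⟩ : ∃ i, r = [i] := by
      rcases hadj with ⟨i, h⟩ | ⟨i, h⟩
      · exact ⟨i, h⟩
      · simp at h
    obtain ⟨c, hi⟩ := Option.isSome_iff_exists.1 (mem_addrs_iff.1 hr)
    rw [wAt_of_subtreeAt hi] at hlt
    rw [greedyMem_cons hi hlt]
    exact H c (List.mem_of_getElem? (by rwa [← subtreeAt_node_singleton])) hlt

theorem bonus_node (w : ℝ) (cs : List WTree) :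
    (node w cs).bonus = if cs = [] then w else if (cs.map bonus).foldr max 0 < w then w else 0 := by
  rw [bonus, List.attach_map_val]

structure ProperPosWeights (t : WTree) : Prop where
  pos : ∀ p ∈ t.addrs, 0 < t.wAt p
  ne_of_adjAddr : ∀ p ∈ t.addrs, ∀ q ∈ t.addrs, adjAddr p q → t.wAt p ≠ t.wAt q

theorem ProperPosWeights.subtreeAt {t s : WTree} {p : List ℕ} (ht : t.ProperPosWeights)
    (hs : t.subtreeAt p = some s) : s.ProperPosWeights where
  pos q hq := by
    rw [← wAt_append hs]
    exact ht.pos _ ((append_mem_addrs_iff hs).2 hq)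
  ne_of_adjAddr q hq r hr hqr := by
    rw [← wAt_append hs, ← wAt_append hs]
    exact ht.ne_of_adjAddr _ ((append_mem_addrs_iff hs).2 hq) _ ((append_mem_addrs_iff hs).2 hr)
      (hqr.append_left p)

theorem bonus_eq_ite_greedyMem (t : WTree) (ht : t.ProperPosWeights) :
    t.bonus = if t.greedyMem [] then t.wt else 0 := by
  induction t using mem_induction with
  | step w cs ih =>
    have hw : 0 < w := by simpa [wAt_nil] using ht.pos [] (nil_mem_addrs _)
    have key : (cs.map bonus).foldr max 0 < w ↔ (node w cs).greedyMem [] := by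
      rw [List.foldr_max_lt_iff, List.forall_mem_map, greedyMem_node_nil_iff]
      simp only [hw, true_and]
      refine forall₂_congr fun c hc => ?_
      obtain ⟨i, hi⟩ : ∃ i, (node w cs).subtreeAt [i] = some c := by
        simpa [subtreeAt_node_singleton] using List.mem_iff_getElem?.1 hc
      have hne : w ≠ c.wt := by
        simpa [wAt_nil, wAt_of_subtreeAt hi] using
          ht.ne_of_adjAddr [] (nil_mem_addrs _) [i] (mem_addrs_of_subtreeAt hi) (.inl ⟨i, rfl⟩)
      rw [ih c hc (ht.subtreeAt hi)]
      by_cases hg : c.greedyMem []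
      · simp only [hg, if_true, not_true_eq_false, imp_false, not_lt]
        exact ⟨le_of_lt, (lt_of_le_of_ne · hne.symm)⟩
      · simp [hg, hw]
    rw [bonus_node]
    simp only [← key]
    by_cases hcs : cs = []
    · simp [hcs, hw]
    · simp [hcs]

end WTree

open WTree in
/-- For a rooted tree with distinct positive node weights, the bonus of every node `i`
equals `W_i · 1{i belongs to the greedy independent set of the subtree rooted at i}`. -/
theorem bonus_eq_weight_mul_greedy_indicator (t : WTree)
    (hpos : ∀ p ∈ t.addrs, 0 < t.wAt p)
    (hdist : ∀ p ∈ t.addrs, ∀ q ∈ t.addrs, p ≠ q → t.wAt p ≠ t.wAt q) :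
    ∀ p ∈ t.addrs, ∀ s : WTree, t.subtreeAt p = some s →
      s.bonus = if s.greedyMem [] then s.wt else 0 := by
  intro p _ s hs
  exact bonus_eq_ite_greedyMem s
    (ProperPosWeights.subtreeAt ⟨hpos, fun p hp q hq hpq => hdist p hp q hq hpq.ne⟩ hs)
end

section
/- Let T be a rooted tree with distinct positive edge weights, and define the matching bonus MS(i) = 0 if i is a leaf, and MS(i) = max over children j of ( W_{ij} · 1{W_{ij} > MS(j)} ) otherwise. Then for every node i, MS(i) = max over children j of W_{ij} · 1{edge (i,j) belongs to the greedy matching of the subtree T_i}. -/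
open scoped Classical

/-- Finite rooted trees with real weights on the edges: a node carries the list of
(weight of edge to child, child subtree) pairs. -/
inductive ETree : Type
  | node : List (ℝ × ETree) → ETree

namespace ETree

/-- The children (edge weight, subtree) pairs of the root. -/
def children : ETree → List (ℝ × ETree)
  | node cs => cs

/-- The matching bonus `MS`: `MS(i) = 0` for a leaf, and
`MS(i) = max over children j of (W_{ij} · 1{W_{ij} > MS(j)})` otherwise. -/
noncomputable def mbonus : ETree → ℝ
  | node cs =>
    ((cs.attach.map fun c => if mbonus c.1.2 < c.1.1 then c.1.1 else 0).foldr max 0)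
decreasing_by
  all_goals
    have h1 := List.sizeOf_lt_of_mem c.2
    have h2 : sizeOf c.1.2 < sizeOf c.1 := by
      obtain ⟨a, b⟩ := (c : ℝ × ETree)
      simp only [Prod.mk.sizeOf_spec]
      omega
    simp only [ETree.node.sizeOf_spec]
    omega

/-- The subtree at a given address (sequence of child indices), if it exists. -/
def subtreeAt : ETree → List ℕ → Option ETree
  | t, [] => some t
  | node cs, i :: p =>
    match cs[i]? with
    | some c => subtreeAt c.2 p
    | none => none
termination_by _ p => p.length

/-- The list of addresses of all nodes of the tree. -/
def addrs : ETree → List (List ℕ)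
  | node cs =>
    [] :: (List.range cs.length).flatMap fun i =>
      match h : cs[i]? with
      | some c => (addrs c.2).map (i :: ·)
      | none => []
decreasing_by
  have hmem : c ∈ cs := by
    obtain ⟨hlt, rfl⟩ := List.getElem?_eq_some_iff.mp h
    exact List.getElem_mem hlt
  have h1 := List.sizeOf_lt_of_mem hmem
  have h2 : sizeOf c.2 < sizeOf c := by
    obtain ⟨a, b⟩ := c
    simp only [Prod.mk.sizeOf_spec]
    omega
  simp only [ETree.node.sizeOf_spec]
  omega

/-- A nonempty address denotes a node of `t` together with the edge from its parent;
`isEdge t q` says that this edge exists. -/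
def isEdge (t : ETree) (q : List ℕ) : Prop := q ≠ [] ∧ (subtreeAt t q).isSome

/-- The weight of the edge leading from the parent of the node at address `q` to that node
(junk value `0` if there is no such edge). -/
def ewAt : ETree → List ℕ → ℝ
  | _, [] => 0
  | node cs, i :: p =>
    match cs[i]? with
    | some c => if p = [] then c.1 else ewAt c.2 p
    | none => 0
termination_by _ p => p.length

/-- Two edges (indexed by the addresses of their lower endpoints) are adjacent iff they
share an endpoint. -/
def edgeAdj (q q' : List ℕ) : Prop :=
  q ≠ q' ∧ (q.dropLast = q'.dropLast ∨ q.dropLast = q' ∨ q'.dropLast = q)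

end ETree

namespace ETree

/-- Membership of the edge with lower endpoint at address `q` in the matching produced by the
greedy algorithm on `t` (repeatedly pick the heaviest remaining edge, add it, delete all
edges sharing an endpoint): an edge is selected iff no heavier adjacent edge is selected. -/
def greedyMatchMem (t : ETree) (q : List ℕ) : Prop :=
  isEdge t q ∧ ∀ q', q' ∈ addrs t → q' ≠ [] → edgeAdj q q' → ewAt t q < ewAt t q' →
    ¬ greedyMatchMem t q'
termination_by (addrs t).countP fun q' => decide (ewAt t q < ewAt t q')
decreasing_by
  rename_i hq hne hadj hlt
  exact List.countP_lt_countP (addrs t) _ _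
    (fun x hx => by
      simp only [decide_eq_true_eq] at *
      exact lt_trans hlt hx) hq (by simpa using hlt) (by simp)

end ETree

/-!
By induction on the tree. An edge of a child subtree `T_j` that is heavier than `W_{ij}` is
adjacent only to edges of `T_j` and possibly to `(i, j)`, which is lighter; since the greedy choice
of an edge depends only on heavier adjacent edges, such an edge is selected in `T_i` iff it is
selected in `T_j`. Hence `(i, j)` is selected in `T_i` iff no heavier sibling edge is selected and
no edge from `j` heavier than `W_{ij}` is selected in `T_j`, i.e. (by induction, the weights being
distinct and positive) iff no heavier sibling edge is selected and `MS(j) < W_{ij}`. So every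
selected edge at `i` has `MS(j) < W_{ij}`, and among the children with `MS(j) < W_{ij}` the heaviest
edge is selected: both maxima agree.
-/

theorem List.foldr_max_le_iff {α : Type*} [LinearOrder α] (l : List α) (b x : α) :
    l.foldr max b ≤ x ↔ b ≤ x ∧ ∀ y ∈ l, y ≤ x := by
  induction l with
  | nil => simp
  | cons a l ih => simp only [List.foldr_cons, max_le_iff, ih, List.forall_mem_cons]; tauto

theorem List.foldr_max_lt_iff_s7 {α : Type*} [LinearOrder α] (l : List α) (b x : α) :
    l.foldr max b < x ↔ b < x ∧ ∀ y ∈ l, y < x := by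
  induction l with
  | nil => simp
  | cons a l ih => simp only [List.foldr_cons, max_lt_iff, ih, List.forall_mem_cons]; tauto

-- `S` is the greedy selection among edges of a star whose eligible edges are those with `P`.
theorem forall_le_iff_of_greedy {ι α : Type*} [LinearOrder α] {w : ι → α} {P S : ι → Prop}
    (hS : ∀ i, S i ↔ P i ∧ ∀ j, w i < w j → ¬ S j) {x : α} :
    (∀ i, P i → w i ≤ x) ↔ ∀ i, S i → w i ≤ x := by
  refine ⟨fun h i hi => h i ((hS i).1 hi).1, fun h i hi => ?_⟩
  by_cases hsel : S i
  · exact h i hsel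
  · obtain ⟨j, hij, hj⟩ : ∃ j, w i < w j ∧ S j := by simpa [hS i, hi] using hsel
    exact hij.le.trans (h j hj)

namespace ETree

@[induction_eliminator]
theorem induction_children {motive : ETree → Prop}
    (node : ∀ cs, (∀ c ∈ cs, motive c.2) → motive (node cs)) (t : ETree) : motive t :=
  ETree.rec (motive_1 := motive) (motive_2 := fun cs => ∀ c ∈ cs, motive c.2)
    (motive_3 := fun c => motive c.2) node (by simp)
    (fun c cs hc hcs => List.forall_mem_cons.2 ⟨hc, hcs⟩) (fun _ _ h => h) t

theorem subtreeAt_cons (cs : List (ℝ × ETree)) (i : ℕ) (p : List ℕ) :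
    subtreeAt (node cs) (i :: p) = cs[i]?.bind fun c => subtreeAt c.2 p := by
  rw [subtreeAt]; cases cs[i]? <;> rfl

theorem subtreeAt_append (t : ETree) (p q : List ℕ) :
    subtreeAt t (p ++ q) = (subtreeAt t p).bind fun s => subtreeAt s q := by
  induction p generalizing t with
  | nil => simp [subtreeAt]
  | cons i p ih =>
    obtain ⟨cs⟩ := t
    simp only [List.cons_append, subtreeAt_cons, ih]
    cases cs[i]? <;> rfl

theorem mem_addrs_cons {cs : List (ℝ × ETree)} {i : ℕ} {p : List ℕ} :
    i :: p ∈ addrs (node cs) ↔ ∃ c, cs[i]? = some c ∧ p ∈ addrs c.2 := by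
  rw [addrs]
  simp only [List.mem_cons, reduceCtorEq, false_or, List.mem_flatMap, List.mem_range]
  constructor
  · rintro ⟨j, -, h⟩
    split at h
    · next c hc =>
      simp only [List.mem_map, List.cons.injEq] at h
      obtain ⟨q, hq, rfl, rfl⟩ := h
      exact ⟨c, hc, hq⟩
    · simp at h
  · rintro ⟨c, hc, hp⟩
    refine ⟨i, (List.getElem?_eq_some_iff.1 hc).1, ?_⟩
    split
    · next c' hc' => simp_all
    · simp_all

theorem mem_addrs_iff {t : ETree} {q : List ℕ} : q ∈ addrs t ↔ (subtreeAt t q).isSome := by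
  induction q generalizing t with
  | nil => cases t; simp [addrs, subtreeAt]
  | cons i p ih =>
    obtain ⟨cs⟩ := t
    rw [mem_addrs_cons, subtreeAt_cons]
    cases cs[i]? <;> simp [ih]

theorem mem_addrs_append {t s : ETree} {p q : List ℕ} (hs : t.subtreeAt p = some s)
    (hq : q ∈ addrs s) : p ++ q ∈ addrs t := by
  rw [mem_addrs_iff, subtreeAt_append, hs]
  exact mem_addrs_iff.1 hq

theorem singleton_mem_addrs_iff {t : ETree} {i : ℕ} : [i] ∈ addrs t ↔ i < t.children.length := by
  obtain ⟨cs⟩ := t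
  rw [mem_addrs_iff, subtreeAt_cons, children]
  cases h : cs[i]? with
  | none => simpa using h
  | some c => simp [subtreeAt, (List.getElem?_eq_some_iff.1 h).1]

theorem isEdge_iff {t : ETree} {q : List ℕ} : isEdge t q ↔ q ≠ [] ∧ q ∈ addrs t := by
  rw [isEdge, mem_addrs_iff]

theorem isEdge_cons {cs : List (ℝ × ETree)} {i : ℕ} {c : ℝ × ETree} (hc : cs[i]? = some c)
    {p : List ℕ} (hp : p ≠ []) : isEdge (node cs) (i :: p) ↔ isEdge c.2 p := by
  simp [isEdge, subtreeAt_cons, hc, hp]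

theorem ewAt_singleton {cs : List (ℝ × ETree)} {i : ℕ} {c : ℝ × ETree} (hc : cs[i]? = some c) :
    ewAt (node cs) [i] = c.1 := by
  rw [ewAt, hc]; rfl

theorem ewAt_cons {cs : List (ℝ × ETree)} {i : ℕ} {c : ℝ × ETree} (hc : cs[i]? = some c)
    {p : List ℕ} (hp : p ≠ []) : ewAt (node cs) (i :: p) = ewAt c.2 p := by
  rw [ewAt, hc]; exact if_neg hp

theorem ewAt_append {t s : ETree} {p q : List ℕ} (hs : t.subtreeAt p = some s) (hq : q ≠ []) :
    ewAt t (p ++ q) = ewAt s q := by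
  induction p generalizing t with
  | nil => simp_all [subtreeAt]
  | cons i p ih =>
    obtain ⟨cs⟩ := t
    rw [subtreeAt_cons, Option.bind_eq_some_iff] at hs
    obtain ⟨c, hc, hs⟩ := hs
    rw [List.cons_append, ewAt_cons hc (by simp [hq]), ih hs]

def PosWeights (t : ETree) : Prop :=
  ∀ q ∈ t.addrs, q ≠ [] → 0 < t.ewAt q

def DistinctWeights (t : ETree) : Prop :=
  ∀ q ∈ t.addrs, ∀ q' ∈ t.addrs, q ≠ [] → q' ≠ [] → q ≠ q' → t.ewAt q ≠ t.ewAt q'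

theorem PosWeights.subtreeAt {t s : ETree} {p : List ℕ} (h : PosWeights t)
    (hs : t.subtreeAt p = some s) : PosWeights s := fun q hq hq0 =>
  ewAt_append hs hq0 ▸ h _ (mem_addrs_append hs hq) (by simp [hq0])

theorem DistinctWeights.subtreeAt {t s : ETree} {p : List ℕ} (h : DistinctWeights t)
    (hs : t.subtreeAt p = some s) : DistinctWeights s := fun q hq q' hq' hq0 hq0' hne => by
  rw [← ewAt_append hs hq0, ← ewAt_append hs hq0']
  exact h _ (mem_addrs_append hs hq) _ (mem_addrs_append hs hq') (by simp [hq0]) (by simp [hq0'])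
    (fun h => hne (List.append_cancel_left h))

theorem edgeAdj_cons_cons {i : ℕ} {p p' : List ℕ} (hp : p ≠ []) (hp' : p' ≠ []) :
    edgeAdj (i :: p) (i :: p') ↔ edgeAdj p p' := by
  simp [edgeAdj, List.dropLast_cons_of_ne_nil hp, List.dropLast_cons_of_ne_nil hp']

theorem edgeAdj_singleton_iff {i : ℕ} {q : List ℕ} (hq : q ≠ []) :
    edgeAdj [i] q ↔ (∃ j, j ≠ i ∧ q = [j]) ∨ ∃ k, q = [i, k] := by
  obtain ⟨a, r, rfl⟩ := List.exists_cons_of_ne_nil hq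
  rcases r with _ | ⟨b, r⟩
  · grind [edgeAdj]
  · rcases r with _ | ⟨c, r⟩
    · simp [edgeAdj]
    · simp [edgeAdj, List.dropLast_cons_of_ne_nil]

theorem eq_singleton_or_of_edgeAdj_cons {i : ℕ} {p q : List ℕ} (hp : p ≠ []) (hq : q ≠ [])
    (h : edgeAdj (i :: p) q) : q = [i] ∨ ∃ p', p' ≠ [] ∧ q = i :: p' ∧ edgeAdj p p' := by
  obtain ⟨a, r, rfl⟩ := List.exists_cons_of_ne_nil hq
  rcases r with _ | ⟨b, r⟩
  · rw [edgeAdj, List.dropLast_cons_of_ne_nil hp] at h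
    grind
  · rw [edgeAdj, List.dropLast_cons_of_ne_nil (List.cons_ne_nil b r),
      List.dropLast_cons_of_ne_nil hp] at h
    right
    grind [edgeAdj]

theorem induction_heavier (t : ETree) {motive : List ℕ → Prop}
    (ind : ∀ q, (∀ q' ∈ t.addrs, t.ewAt q < t.ewAt q' → motive q') → motive q) (q : List ℕ) :
    motive q :=
  (measure fun q => (addrs t).countP fun q' => decide (ewAt t q < ewAt t q')).wf.induction q
    fun q ih => ind q fun q' hq' hlt => ih q' <|
      List.countP_lt_countP _ _ _ (fun _ hx => by simp_all [hlt.trans]) hq' (by simpa using hlt)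
        (by simp)

theorem mem_addrs_of_greedyMatchMem {t : ETree} {q : List ℕ} (h : greedyMatchMem t q) :
    q ∈ addrs t := by
  rw [greedyMatchMem, isEdge_iff] at h
  exact h.1.2

theorem greedyMatchMem_cons_iff {cs : List (ℝ × ETree)} {i : ℕ} {c : ℝ × ETree}
    (hc : cs[i]? = some c) {p : List ℕ} (hp : p ≠ []) (hw : c.1 < ewAt c.2 p) :
    greedyMatchMem (node cs) (i :: p) ↔ greedyMatchMem c.2 p := by
  suffices ∀ q p, q = i :: p → p ≠ [] → c.1 < ewAt c.2 p →
      (greedyMatchMem (node cs) q ↔ greedyMatchMem c.2 p) from this _ p rfl hp hw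
  intro q
  induction q using (node cs).induction_heavier with
  | ind q ih =>
  rintro p rfl hp hw
  rw [greedyMatchMem, greedyMatchMem, isEdge_cons hc hp]
  refine and_congr_right fun _ => ⟨fun H p' hp' hp'0 hadj hlt hsel => ?_,
    fun H q' hq' hq'0 hadj hlt hsel => ?_⟩
  · have hmem : i :: p' ∈ addrs (node cs) := mem_addrs_cons.2 ⟨c, hc, hp'⟩
    have hlt' : ewAt (node cs) (i :: p) < ewAt (node cs) (i :: p') := by
      rwa [ewAt_cons hc hp, ewAt_cons hc hp'0]
    exact H _ hmem (by simp) ((edgeAdj_cons_cons hp hp'0).2 hadj) hlt'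
      ((ih _ hmem hlt' p' rfl hp'0 (hw.trans hlt)).2 hsel)
  · rcases eq_singleton_or_of_edgeAdj_cons hp hq'0 hadj with rfl | ⟨p', hp'0, rfl, hadj'⟩
    · rw [ewAt_cons hc hp, ewAt_singleton hc] at hlt
      exact lt_asymm hw hlt
    · obtain ⟨c', hc', hp'⟩ := mem_addrs_cons.1 hq'
      obtain rfl : c' = c := Option.some_injective _ (hc'.symm.trans hc)
      have hlt' := hlt
      rw [ewAt_cons hc hp, ewAt_cons hc hp'0] at hlt'
      exact H p' hp' hp'0 hadj' hlt' ((ih _ hq' hlt p' rfl hp'0 (hw.trans hlt')).1 hsel)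

theorem greedyMatchMem_singleton_iff {cs : List (ℝ × ETree)} {i : ℕ} {c : ℝ × ETree}
    (hc : cs[i]? = some c) :
    greedyMatchMem (node cs) [i] ↔
      (∀ j, c.1 < ewAt (node cs) [j] → ¬ greedyMatchMem (node cs) [j]) ∧
      ∀ k, c.1 < ewAt c.2 [k] → ¬ greedyMatchMem c.2 [k] := by
  have hedge : isEdge (node cs) [i] := by simp [isEdge, subtreeAt_cons, hc, subtreeAt]
  rw [greedyMatchMem, and_iff_right hedge, ewAt_singleton hc]
  constructor
  · intro H
    refine ⟨fun j hlt hsel => ?_, fun k hlt hsel => ?_⟩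
    · have hji : j ≠ i := by rintro rfl; rw [ewAt_singleton hc] at hlt; exact hlt.false
      exact H [j] (mem_addrs_of_greedyMatchMem hsel) (by simp)
        ((edgeAdj_singleton_iff (by simp)).2 (Or.inl ⟨j, hji, rfl⟩)) hlt hsel
    · have hmem : [i, k] ∈ addrs (node cs) :=
        mem_addrs_cons.2 ⟨c, hc, mem_addrs_of_greedyMatchMem hsel⟩
      exact H [i, k] hmem (by simp) ((edgeAdj_singleton_iff (by simp)).2 (Or.inr ⟨k, rfl⟩))
        (by rwa [ewAt_cons hc (by simp)]) ((greedyMatchMem_cons_iff hc (by simp) hlt).2 hsel)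
  · rintro ⟨H1, H2⟩ q - hq0 hadj hlt hsel
    rcases (edgeAdj_singleton_iff hq0).1 hadj with ⟨j, -, rfl⟩ | ⟨k, rfl⟩
    · exact H1 j hlt hsel
    · rw [ewAt_cons hc (by simp)] at hlt
      exact H2 k hlt ((greedyMatchMem_cons_iff hc (by simp) hlt).1 hsel)

noncomputable def greedyBonus (t : ETree) : ℝ :=
  ((List.range t.children.length).map fun i =>
    if t.greedyMatchMem [i] then t.ewAt [i] else 0).foldr max 0

theorem forall_greedyBonus_terms_iff {t : ETree} {r : ℝ → Prop} (h0 : r 0) :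
    (∀ y ∈ (List.range t.children.length).map
        (fun i => if t.greedyMatchMem [i] then t.ewAt [i] else 0), r y) ↔
      ∀ i, greedyMatchMem t [i] → r (ewAt t [i]) := by
  simp only [List.forall_mem_map, List.mem_range]
  refine ⟨fun h i hi => ?_, fun h i _ => ?_⟩
  · simpa [hi] using h i (singleton_mem_addrs_iff.1 (mem_addrs_of_greedyMatchMem hi))
  · split_ifs with hi
    exacts [h i hi, h0]

theorem greedyBonus_le_iff {t : ETree} {x : ℝ} :
    greedyBonus t ≤ x ↔ 0 ≤ x ∧ ∀ i, greedyMatchMem t [i] → ewAt t [i] ≤ x := by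
  rw [greedyBonus, List.foldr_max_le_iff]
  exact and_congr_right (forall_greedyBonus_terms_iff (r := (· ≤ x)))

theorem greedyBonus_lt_iff {t : ETree} {x : ℝ} :
    greedyBonus t < x ↔ 0 < x ∧ ∀ i, greedyMatchMem t [i] → ewAt t [i] < x := by
  rw [greedyBonus, List.foldr_max_lt_iff_s7]
  exact and_congr_right (forall_greedyBonus_terms_iff (r := (· < x)))

theorem mbonus_le_iff {cs : List (ℝ × ETree)} {x : ℝ} :
    mbonus (node cs) ≤ x ↔
      0 ≤ x ∧ ∀ (i : ℕ) (c : ℝ × ETree), cs[i]? = some c → mbonus c.2 < c.1 → c.1 ≤ x := by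
  rw [mbonus, List.foldr_max_le_iff]
  refine and_congr_right fun hx => ?_
  simp only [List.forall_mem_map, List.mem_attach, true_implies, Subtype.forall]
  simp only [List.mem_iff_getElem?]
  refine ⟨fun h i c hc hb => by simpa [hb] using h c ⟨i, hc⟩, fun h c ⟨i, hc⟩ => ?_⟩
  split_ifs with hb
  exacts [h i c hc hb, hx]

theorem greedyBonus_lt_iff_of_ne {t : ETree} {w : ℝ} (hw : 0 < w)
    (hne : ∀ k, greedyMatchMem t [k] → ewAt t [k] ≠ w) :
    greedyBonus t < w ↔ ∀ k, w < ewAt t [k] → ¬ greedyMatchMem t [k] := by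
  rw [greedyBonus_lt_iff, and_iff_right hw]
  exact forall_congr' fun k => ⟨fun h hlt hsel => lt_asymm hlt (h hsel),
    fun h hsel => lt_of_le_of_ne (not_lt.1 fun hlt => h hlt hsel) (hne k hsel)⟩

theorem mbonus_eq_greedyBonus (t : ETree) (hpos : PosWeights t) (hdist : DistinctWeights t) :
    mbonus t = greedyBonus t := by
  induction t with
  | node cs ih =>
  have hbonus : ∀ (i : ℕ) (c : ℝ × ETree), cs[i]? = some c →
      (mbonus c.2 < c.1 ↔ ∀ k, c.1 < ewAt c.2 [k] → ¬ greedyMatchMem c.2 [k]) := by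
    intro i c hc
    have hsub : subtreeAt (node cs) [i] = some c.2 := by simp [subtreeAt_cons, hc, subtreeAt]
    have hmem : [i] ∈ addrs (node cs) := mem_addrs_iff.2 (by simp [hsub])
    rw [ih c (List.mem_of_getElem? hc) (hpos.subtreeAt hsub) (hdist.subtreeAt hsub)]
    refine greedyBonus_lt_iff_of_ne (ewAt_singleton hc ▸ hpos _ hmem (by simp)) fun k hsel => ?_
    have hne := hdist [i, k] (mem_addrs_cons.2 ⟨c, hc, mem_addrs_of_greedyMatchMem hsel⟩) [i]
      hmem (by simp) (by simp) (by simp)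
    rwa [ewAt_cons hc (by simp), ewAt_singleton hc] at hne
  have hsel : ∀ i, greedyMatchMem (node cs) [i] ↔
      (∃ c, cs[i]? = some c ∧ mbonus c.2 < c.1) ∧
        ∀ j, ewAt (node cs) [i] < ewAt (node cs) [j] → ¬ greedyMatchMem (node cs) [j] := by
    intro i
    cases hc : cs[i]? with
    | none =>
      simp only [reduceCtorEq, false_and, exists_false, iff_false]
      intro h
      exact (List.getElem?_eq_none_iff.1 hc).not_gt
        (singleton_mem_addrs_iff.1 (mem_addrs_of_greedyMatchMem h))
    | some c =>
      rw [greedyMatchMem_singleton_iff hc, ← hbonus i c hc, ewAt_singleton hc]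
      simp [and_comm]
  refine eq_of_forall_ge_iff fun x => ?_
  rw [mbonus_le_iff, greedyBonus_le_iff, ← forall_le_iff_of_greedy hsel]
  refine and_congr_right fun _ => ⟨fun h i ⟨c, hc, hb⟩ => ?_, fun h i c hc hb => ?_⟩
  · rw [ewAt_singleton hc]; exact h i c hc hb
  · rw [← ewAt_singleton hc]; exact h i ⟨c, hc, hb⟩

end ETree

open ETree in
/-- For a rooted tree with distinct positive edge weights, for every node `i` the matching
bonus `MS(i)` equals the maximum over the children `j` of `i` of
`W_{ij} · 1{the edge (i,j) belongs to the greedy matching of the subtree rooted at i}`. -/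
theorem mbonus_eq_max_greedy_matching (t : ETree)
    (hpos : ∀ q ∈ t.addrs, q ≠ [] → 0 < t.ewAt q)
    (hdist : ∀ q ∈ t.addrs, ∀ q' ∈ t.addrs, q ≠ [] → q' ≠ [] → q ≠ q' →
      t.ewAt q ≠ t.ewAt q') :
    ∀ p ∈ t.addrs, ∀ s : ETree, t.subtreeAt p = some s →
      s.mbonus =
        (((List.range s.children.length).map fun i =>
            if s.greedyMatchMem [i] then s.ewAt [i] else 0).foldr max 0) := by
  intro p _ s hs
  exact mbonus_eq_greedyBonus s (PosWeights.subtreeAt (t := t) hpos hs)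
    (DistinctWeights.subtreeAt (t := t) hdist hs)
end

section
/- Let W be a continuous random variable with distribution F, let X be a non-negative integer-valued random variable independent of the W's, and let W^{<X>} denote the maximum of X i.i.d. copies of W (and 0 when X = 0). If the nodes of the complete r-ary tree T(r,d) of depth d are weighted i.i.d. from F, then the bonus S(0) of the root is distributed as W^{<X_{d,r}>}, where X_{d,r} satisfies X_{0,r}=1 and X_{d,r} = (X_{d−1,r}^{(r)}+1)·B(X_{d−1,r}^{(r)}+1). -/
open MeasureTheory
open scoped ENNReal Classical

/-- The node set of the complete `r`-ary tree `T(r,d)` of depth `d`: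
addresses of length at most `d`. -/
def TreeNode (r d : ℕ) : Type := {l : List (Fin r) // l.length ≤ d}

noncomputable instance (r d : ℕ) : Fintype (TreeNode r d) :=
  Fintype.ofInjective (fun l : TreeNode r d => fun i : Fin d => l.1[(i : ℕ)]?)
    (by
      rintro ⟨a, ha⟩ ⟨b, hb⟩ h
      apply Subtype.ext
      apply List.ext_getElem?
      intro n
      by_cases hn : n < d
      · exact congrFun h ⟨n, hn⟩
      · rw [List.getElem?_eq_none (le_trans ha (le_of_not_gt hn)),
          List.getElem?_eq_none (le_trans hb (le_of_not_gt hn))])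

/-- The bonus of each node of `T(r,d)` for a given weighting `w`:
`S(l) = w l` for a leaf (depth `d`), and `S(l) = w l · 1{w l > max over children of S}`
otherwise. -/
noncomputable def Sfun (r d : ℕ) (w : TreeNode r d → ℝ) : TreeNode r d → ℝ := fun l =>
  if h : l.1.length = d then w l
  else
    have hlt : l.1.length < d := lt_of_le_of_ne l.2 h
    if ((List.ofFn fun i : Fin r =>
          Sfun r d w ⟨l.1 ++ [i], by simp [List.length_append]; omega⟩).foldr max 0) < w l
    then w l else 0
termination_by l => d - l.1.length
decreasing_by
  all_goals
    simp only [List.length_append, List.length_cons, List.length_nil]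
    omega

/-- Law of `(j+1)·B(j+1)` : takes value `j+1` with probability `1/(j+1)` and `0` otherwise. -/
noncomputable def Bstep (j : ℕ) : PMF ℕ :=
  (PMF.bernoulli ((j + 1 : NNReal))⁻¹
      (inv_le_one_of_one_le₀ (by exact_mod_cast Nat.one_le_iff_ne_zero.mpr (Nat.succ_ne_zero j)))).map
    (fun b => if b then j + 1 else 0)

/-- Law of the sum of `r` i.i.d. copies of a random variable with law `p`. -/
noncomputable def conv : ℕ → PMF ℕ → PMF ℕ
  | 0, _ => PMF.pure 0
  | r + 1, p => (conv r p).bind fun a => p.map fun b => a + b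

/-- The sequence `X_{d,r}`: `X_{0,r} = 1`,
`X_{d,r} = (X_{d-1,r}^{(r)} + 1)·B(X_{d-1,r}^{(r)} + 1)`. -/
noncomputable def Xd : ℕ → ℕ → PMF ℕ
  | 0, _ => PMF.pure 1
  | d + 1, r => (conv r (Xd d r)).bind Bstep

/-- The law of `W^{<k>}`, the maximum of `k` i.i.d. samples from `ν` (`0` when `k = 0`). -/
noncomputable def maxLaw (ν : Measure ℝ) (k : ℕ) : Measure ℝ :=
  Measure.map (fun v : Fin k → ℝ => (List.ofFn v).foldr max 0) (Measure.pi fun _ : Fin k => ν)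

/-!
Induction on `d`. The root weight is independent of the `r` subtrees, whose root bonuses are
i.i.d. with law `W^{<X_{d-1}>}`. Writing `F(x) = P(W < x)` and `G` for the generating function
of `X_{d-1}`, for `t ≥ 0` the root bonus exceeds `t` exactly when `W > t` and `W` beats all
children, so `P(S(0) > t) = ∫_{x > t} G(F x)^r dF(x)`. Now `G^r` is the generating function of
`Y = X_{d-1}^{(r)}`, and `(n + 1) ∫_{x > t} F(x)^n dF(x) = P(W^{<n+1>} > t)`: the maximum of
`n + 1` samples exceeds `t` iff one of them is a strict maximum above `t` (ties are null since
`F` is continuous), and the `n + 1` such events are disjoint and equally likely. Summing over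
`n` gives the tail of `W^{<(Y+1)·B(Y+1)>}`; both laws live on `[0, ∞)`, so tails determine them.
-/


noncomputable def fmax {n : ℕ} (v : Fin n → ℝ) : ℝ := (List.ofFn v).foldr max 0

section fmax

variable {n : ℕ} (v : Fin n → ℝ)

@[simp]
lemma fmax_zero (v : Fin 0 → ℝ) : fmax v = 0 := rfl

lemma fmax_succ (v : Fin (n + 1) → ℝ) : fmax v = max (v 0) (fmax fun i => v i.succ) := by
  simp [fmax, List.ofFn_succ]

lemma fmax_nonneg : 0 ≤ fmax v := by
  induction n with
  | zero => simp
  | succ n ih => exact (ih _).trans ((fmax_succ v).symm ▸ le_max_right _ _)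

lemma fmax_le_iff {t : ℝ} (ht : 0 ≤ t) : fmax v ≤ t ↔ ∀ i, v i ≤ t := by
  induction n with
  | zero => simpa using ht
  | succ n ih => simp [fmax_succ, ih, Fin.forall_fin_succ]

lemma fmax_lt_iff {x : ℝ} (hx : 0 < x) : fmax v < x ↔ ∀ i, v i < x := by
  induction n with
  | zero => simpa using hx
  | succ n ih => simp [fmax_succ, ih, Fin.forall_fin_succ]

lemma lt_fmax_iff {t : ℝ} (ht : 0 ≤ t) : t < fmax v ↔ ∃ i, t < v i := by
  simpa using (fmax_le_iff v ht).not

@[fun_prop]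
lemma measurable_fmax : Measurable (fmax (n := n)) := by
  induction n with
  | zero => exact Subsingleton.measurable
  | succ n ih =>
    simp only [funext fmax_succ]
    exact (measurable_pi_apply 0).max
      (ih.comp (measurable_pi_lambda _ fun i => measurable_pi_apply _))

end fmax

/-- The bonus `S(i)` of a node of weight `x` whose children have bonuses `s`. -/
noncomputable def bonus {r : ℕ} (x : ℝ) (s : Fin r → ℝ) : ℝ := if fmax s < x then x else 0

lemma bonus_nonneg {r : ℕ} (x : ℝ) (s : Fin r → ℝ) : 0 ≤ bonus x s := by
  unfold bonus
  split_ifs with h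
  exacts [(fmax_nonneg s).trans h.le, le_rfl]

@[fun_prop]
lemma measurable_bonus {r : ℕ} : Measurable fun q : (Fin r → ℝ) × ℝ => bonus q.2 q.1 :=
  Measurable.ite (measurableSet_lt (measurable_fmax.comp measurable_fst) measurable_snd)
    measurable_snd measurable_const

namespace TreeNode

def root (r d : ℕ) : TreeNode r d := ⟨[], by simp⟩

def cons {r d : ℕ} (i : Fin r) (m : TreeNode r d) : TreeNode r (d + 1) :=
  ⟨i :: m.1, by simpa using m.2⟩

def equivOption (r d : ℕ) : Option (Fin r × TreeNode r d) ≃ TreeNode r (d + 1) where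
  toFun := fun o => o.elim (root r (d + 1)) fun p => cons p.1 p.2
  invFun
    | ⟨[], _⟩ => none
    | ⟨i :: m, h⟩ => some (i, ⟨m, by simpa using h⟩)
  left_inv := by rintro (_ | ⟨i, m⟩) <;> rfl
  right_inv := by rintro ⟨_ | ⟨i, m⟩, h⟩ <;> rfl

end TreeNode

open TreeNode

section Sfun

variable {r d : ℕ}

lemma Sfun_of_length_eq (w : TreeNode r d → ℝ) {l : TreeNode r d} (h : l.1.length = d) :
    Sfun r d w l = w l := by
  rw [Sfun.eq_def, dif_pos h]

lemma Sfun_of_length_lt (w : TreeNode r d → ℝ) {l : TreeNode r d} (h : l.1.length < d) :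
    Sfun r d w l = bonus (w l) fun i => Sfun r d w ⟨l.1 ++ [i], by simp; omega⟩ := by
  rw [Sfun.eq_def, dif_neg h.ne]
  rfl

lemma Sfun_cons (w : TreeNode r (d + 1) → ℝ) (i : Fin r) (m : TreeNode r d) :
    Sfun r (d + 1) w (cons i m) = Sfun r d (w ∘ cons i) m := by
  induction m using Sfun.induct r d (w ∘ cons i) with
  | case1 m h =>
    rw [Sfun_of_length_eq _ h, Sfun_of_length_eq _ (by simp [cons, h])]
    rfl
  | case2 m _ h _ _ ih | case3 m _ h _ _ ih =>
    rw [Sfun_of_length_lt _ h, Sfun_of_length_lt _ (by simpa [cons] using h)]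
    exact congrArg _ (funext ih)

lemma Sfun_root_succ (w : TreeNode r (d + 1) → ℝ) :
    Sfun r (d + 1) w (root r (d + 1)) =
      bonus (w (root r (d + 1))) fun i => Sfun r d (w ∘ cons i) (root r d) := by
  rw [Sfun_of_length_lt _ (by simp [root])]
  exact congrArg _ (funext fun i => Sfun_cons w i (root r d))

@[fun_prop]
lemma measurable_Sfun_root : Measurable fun w : TreeNode r d → ℝ => Sfun r d w (root r d) := by
  induction d with
  | zero =>
    simpa only [Sfun_of_length_eq _ (rfl : (root r 0).1.length = 0)] using measurable_pi_apply _
  | succ d ih =>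
    simp only [Sfun_root_succ]
    exact measurable_bonus.comp ((measurable_pi_lambda _ fun i =>
      ih.comp (measurable_pi_lambda _ fun m => measurable_pi_apply _)).prodMk
        (measurable_pi_apply _))

variable (ν : Measure ℝ) [IsProbabilityMeasure ν]

lemma measurePreserving_subtrees_root :
    MeasurePreserving
      (fun w : TreeNode r (d + 1) → ℝ => (fun i m => w (cons i m), w (root r (d + 1))))
      (Measure.pi fun _ : TreeNode r (d + 1) => ν)
      ((Measure.pi fun _ : Fin r => Measure.pi fun _ : TreeNode r d => ν).prod ν) := by
  have reindex := measurePreserving_arrowCongr' (fun _ => ν) (fun _ => ν) (equivOption r d).symm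
    (MeasurableEquiv.refl ℝ) fun _ => MeasurePreserving.id ν
  have split : MeasurePreserving (MeasurableEquiv.piOptionEquivProd fun _ => ℝ)
      (Measure.pi fun _ : Option (Fin r × TreeNode r d) => ν)
      ((Measure.pi fun _ : Fin r × TreeNode r d => ν).prod ν) := by
    refine ⟨MeasurableEquiv.measurable _, ?_⟩
    rw [MeasurableEquiv.map_apply_eq_iff_map_symm_apply_eq]
    exact (Measure.pi_map_piOptionEquivProd (ι := Fin r × TreeNode r d) fun _ => ν).symm
  have curry : MeasurePreserving (MeasurableEquiv.curry (Fin r) (TreeNode r d) ℝ)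
      (Measure.pi fun _ : Fin r × TreeNode r d => ν)
      (Measure.pi fun _ : Fin r => Measure.pi fun _ : TreeNode r d => ν) := by
    refine ⟨MeasurableEquiv.measurable _, ?_⟩
    simpa [Measure.infinitePi_eq_pi] using
      Measure.infinitePi_map_curry fun (_ : Fin r) (_ : TreeNode r d) => ν
  exact (curry.prod (MeasurePreserving.id ν)).comp (split.comp reindex)

lemma map_Sfun_root_succ :
    (Measure.pi fun _ => ν).map (fun w : TreeNode r (d + 1) → ℝ => Sfun r _ w (root r _)) =
      ((Measure.pi fun _ : Fin r => (Measure.pi fun _ => ν).map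
          fun w : TreeNode r d → ℝ => Sfun r d w (root r d)).prod ν).map
        fun q => bonus q.2 q.1 := by
  have hsub :
      Measurable fun (g : Fin r → TreeNode r d → ℝ) i => Sfun r d (g i) (root r d) := by
    fun_prop
  have hsplit := measurePreserving_subtrees_root (r := r) (d := d) ν
  have hdecomp : (fun w : TreeNode r (d + 1) → ℝ => Sfun r (d + 1) w (root r (d + 1))) =
      (fun q => bonus q.2 q.1) ∘ Prod.map (fun g i => Sfun r d (g i) (root r d)) id ∘
        fun w => (fun i m => w (cons i m), w (root r (d + 1))) :=
    funext Sfun_root_succ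
  rw [hdecomp, ← Measure.map_map measurable_bonus ((hsub.prodMap measurable_id).comp
      hsplit.measurable), ← Measure.map_map (hsub.prodMap measurable_id) hsplit.measurable,
    hsplit.map_eq, ← Measure.map_prod_map _ _ hsub measurable_id, Measure.map_id,
    Measure.pi_map_pi fun _ => measurable_Sfun_root.aemeasurable]

end Sfun

section maxLaw

variable {ν : Measure ℝ}

lemma maxLaw_eq_map_fmax (k : ℕ) : maxLaw ν k = (Measure.pi fun _ : Fin k => ν).map fmax := rfl

lemma maxLaw_Iio_zero (k : ℕ) : maxLaw ν k (Set.Iio 0) = 0 := by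
  rw [maxLaw_eq_map_fmax, Measure.map_apply measurable_fmax measurableSet_Iio]
  convert measure_empty (μ := Measure.pi fun _ : Fin k => ν)
  ext v
  simpa using fmax_nonneg v

lemma maxLaw_zero : maxLaw ν 0 = Measure.dirac 0 := by
  rw [maxLaw_eq_map_fmax, Measure.pi_of_empty, Measure.map_dirac' measurable_fmax, fmax_zero]

lemma maxLaw_Iio [SigmaFinite ν] (k : ℕ) {x : ℝ} (hx : 0 < x) :
    maxLaw ν k (Set.Iio x) = ν (Set.Iio x) ^ k := by
  rw [maxLaw_eq_map_fmax, Measure.map_apply measurable_fmax measurableSet_Iio]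
  have : fmax ⁻¹' Set.Iio x = Set.univ.pi fun _ : Fin k => Set.Iio x := by
    ext v
    simp [fmax_lt_iff v hx]
  simp [this, Measure.pi_pi]

instance isProbabilityMeasure_maxLaw [IsProbabilityMeasure ν] (k : ℕ) :
    IsProbabilityMeasure (maxLaw ν k) :=
  Measure.isProbabilityMeasure_map measurable_fmax.aemeasurable

lemma maxLaw_one [IsProbabilityMeasure ν] (hν : ν (Set.Iio 0) = 0) : maxLaw ν 1 = ν := by
  have hmax : fmax (n := 1) = (fun x => max x 0) ∘ fun v => v 0 := by
    funext v
    simp [fmax_succ]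
  have hid : (fun x : ℝ => max x 0) =ᵐ[ν] id := by
    filter_upwards [measure_eq_zero_iff_ae_notMem.mp hν] with x hx
    simpa using not_lt.mp hx
  rw [maxLaw_eq_map_fmax, hmax,
    ← Measure.map_map (μ := Measure.pi fun _ : Fin 1 => ν) (by fun_prop)
      (measurable_pi_apply 0), (measurePreserving_eval _ 0).map_eq, Measure.map_congr hid,
    Measure.map_id]

end maxLaw

section OrderStatistics

variable {n : ℕ}

lemma pi_apply_eq_lintegral_insertNth {α : Type*} [MeasurableSpace α] {ν : Measure α}
    [SigmaFinite ν] (j : Fin (n + 1)) {S : Set (Fin (n + 1) → α)} (hS : MeasurableSet S) :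
    Measure.pi (fun _ => ν) S =
      ∫⁻ x, Measure.pi (fun _ => ν) {w | j.insertNth x w ∈ S} ∂ν := by
  have e := measurePreserving_piFinSuccAbove (fun _ : Fin (n + 1) => ν) j
  rw [← (e.symm _).map_eq, MeasurableEquiv.map_apply,
    Measure.prod_apply ((MeasurableEquiv.measurable _) hS)]
  rfl

variable {ν : Measure ℝ} [SigmaFinite ν]

lemma pi_apply_eq_apply_eq_zero [NullSingletonClass ν] {i j : Fin (n + 1)} (hij : i ≠ j) :
    Measure.pi (fun _ => ν) {v | v i = v j} = 0 := by
  obtain ⟨k, rfl⟩ := Fin.exists_succAbove_eq hij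
  rw [pi_apply_eq_lintegral_insertNth j (measurableSet_eq_fun (by fun_prop) (by fun_prop))]
  simp [Measure.pi_hyperplane]

lemma pi_isStrictMax_apply (j : Fin (n + 1)) (t : ℝ) :
    Measure.pi (fun _ => ν) {v | t < v j ∧ ∀ i ≠ j, v i < v j} =
      ∫⁻ x in Set.Ioi t, ν (Set.Iio x) ^ n ∂ν := by
  have hS : MeasurableSet {v : Fin (n + 1) → ℝ | t < v j ∧ ∀ i ≠ j, v i < v j} := by
    measurability
  rw [pi_apply_eq_lintegral_insertNth j hS, ← lintegral_indicator measurableSet_Ioi]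
  congr with x
  have fiber : {w : Fin n → ℝ | (j.insertNth x w : Fin (n + 1) → ℝ) ∈
      {v : Fin (n + 1) → ℝ | t < v j ∧ ∀ i ≠ j, v i < v j}} =
      {_w | t < x} ∩ Set.univ.pi fun _ => Set.Iio x := by
    ext w
    simp [j.forall_iff_succAbove, Fin.succAbove_ne]
  rw [fiber]
  by_cases hx : t < x <;> simp [hx, Measure.pi_pi]

lemma maxLaw_succ_Ioi [NullSingletonClass ν] {t : ℝ} (ht : 0 ≤ t) :
    maxLaw ν (n + 1) (Set.Ioi t) = (n + 1) * ∫⁻ x in Set.Ioi t, ν (Set.Iio x) ^ n ∂ν := by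
  set μ := Measure.pi fun _ : Fin (n + 1) => ν
  set A : Fin (n + 1) → Set (Fin (n + 1) → ℝ) :=
    fun j => {v | t < v j ∧ ∀ i ≠ j, v i < v j}
  have hA : ∀ j, MeasurableSet (A j) := fun j => by simp only [A]; measurability
  have disjoint : Pairwise (Function.onFun Disjoint A) := fun j k hjk =>
    Set.disjoint_left.mpr fun v hj hk => (hj.2 k hjk.symm).asymm (hk.2 j hjk)
  set T := ⋃ (i) (j) (_ : i ≠ j), {v : Fin (n + 1) → ℝ | v i = v j}
  have ties : μ T = 0 :=
    measure_iUnion_null fun i => measure_iUnion_null fun j =>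
      measure_iUnion_null fun hij => pi_apply_eq_apply_eq_zero hij
  have cover : fmax ⁻¹' Set.Ioi t ⊆ (⋃ j, A j) ∪ T := by
    intro v hv
    obtain ⟨i, hi⟩ := (lt_fmax_iff v ht).mp hv
    obtain ⟨j, hj⟩ := Finite.exists_max v
    by_cases htie : ∃ k ≠ j, v k = v j
    · obtain ⟨k, hkj, hk⟩ := htie
      exact Or.inr (Set.mem_iUnion₂.mpr ⟨k, j, Set.mem_iUnion.mpr ⟨hkj, hk⟩⟩)
    · push Not at htie
      exact Or.inl (Set.mem_iUnion.mpr
        ⟨j, hi.trans_le (hj i), fun k hk => (hj k).lt_of_ne (htie k hk)⟩)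
  have hunion : μ (fmax ⁻¹' Set.Ioi t) = μ (⋃ j, A j) := by
    refine le_antisymm ((measure_mono cover).trans (measure_union_le _ _) |>.trans_eq
      (by rw [ties, add_zero])) (measure_mono fun v hv => ?_)
    obtain ⟨j, hj⟩ := Set.mem_iUnion.mp hv
    exact (lt_fmax_iff v ht).mpr ⟨j, hj.1⟩
  rw [maxLaw_eq_map_fmax, Measure.map_apply measurable_fmax measurableSet_Ioi, hunion,
    measure_iUnion disjoint hA, tsum_fintype]
  simp only [A, μ, pi_isStrictMax_apply, Finset.sum_const, Finset.card_univ, Fintype.card_fin,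
    nsmul_eq_mul, Nat.cast_succ]

end OrderStatistics

namespace PMF

variable {α β : Type*}

lemma tsum_bind_mul (p : PMF α) (g : α → PMF β) (f : β → ℝ≥0∞) :
    ∑' b, p.bind g b * f b = ∑' a, p a * ∑' b, g a b * f b := by
  simp only [bind_apply, ← ENNReal.tsum_mul_right, ← ENNReal.tsum_mul_left, mul_assoc]
  exact ENNReal.tsum_comm

lemma tsum_map_mul (p : PMF α) (g : α → β) (f : β → ℝ≥0∞) :
    ∑' b, p.map g b * f b = ∑' a, p a * f (g a) := by
  rw [← bind_pure_comp, tsum_bind_mul]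
  congr with a
  rw [tsum_eq_single (g a) fun b hb => by simp [hb], Function.comp_apply, pure_apply_self, one_mul]

noncomputable def pgf (p : PMF ℕ) (y : ℝ≥0∞) : ℝ≥0∞ := ∑' k, p k * y ^ k

lemma pgf_conv (p : PMF ℕ) (y : ℝ≥0∞) (r : ℕ) : pgf (conv r p) y = pgf p y ^ r := by
  induction r with
  | zero => simp [pgf, conv]
  | succ r ih =>
    calc pgf (conv (r + 1) p) y = ∑' a, conv r p a * ∑' b, p b * y ^ (a + b) := by
          simp only [pgf, conv, tsum_bind_mul, tsum_map_mul]
      _ = pgf (conv r p) y * pgf p y := by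
          rw [pgf, pgf, ← ENNReal.tsum_mul_right]
          congr with a
          rw [mul_assoc, ← ENNReal.tsum_mul_left (a := y ^ a)]
          congr 1
          refine tsum_congr fun b => ?_
          ring
      _ = pgf p y ^ (r + 1) := by rw [ih, pow_succ]

end PMF

set_option linter.deprecated false in
lemma tsum_Bstep_mul (n : ℕ) (f : ℕ → ℝ≥0∞) :
    ∑' k, Bstep n k * f k =
      ((n : ℝ≥0∞) + 1)⁻¹ * f (n + 1) + (1 - ((n : ℝ≥0∞) + 1)⁻¹) * f 0 := by
  rw [Bstep, PMF.tsum_map_mul, tsum_bool]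
  simp [PMF.bernoulli_apply, add_comm]

/-- The law of `W^{<X>}` when `X` has law `p` and is independent of the samples. -/
noncomputable def maxLawMix (ν : Measure ℝ) (p : PMF ℕ) : Measure ℝ :=
  Measure.sum fun k => p k • maxLaw ν k

section maxLawMix

variable {ν : Measure ℝ}

lemma maxLawMix_apply (p : PMF ℕ) {s : Set ℝ} (hs : MeasurableSet s) :
    maxLawMix ν p s = ∑' k, p k * maxLaw ν k s := by
  simp [maxLawMix, Measure.sum_apply _ hs]

lemma maxLawMix_pure (k : ℕ) : maxLawMix ν (PMF.pure k) = maxLaw ν k := by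
  ext s hs
  rw [maxLawMix_apply _ hs, tsum_eq_single k fun j hj => by simp [hj]]
  simp

lemma maxLawMix_Iio_zero (p : PMF ℕ) : maxLawMix ν p (Set.Iio 0) = 0 := by
  simp [maxLawMix_apply p measurableSet_Iio, maxLaw_Iio_zero]

lemma maxLawMix_bind_Bstep_apply (p : PMF ℕ) {s : Set ℝ} (hs : MeasurableSet s)
    (h0 : maxLaw ν 0 s = 0) :
    maxLawMix ν (p.bind Bstep) s =
      ∑' n, p n * (((n : ℝ≥0∞) + 1)⁻¹ * maxLaw ν (n + 1) s) := by
  rw [maxLawMix_apply _ hs, PMF.tsum_bind_mul]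
  simp [tsum_Bstep_mul, h0]

instance isProbabilityMeasure_maxLawMix [IsProbabilityMeasure ν] (p : PMF ℕ) :
    IsProbabilityMeasure (maxLawMix ν p) :=
  ⟨by simp [maxLawMix_apply p MeasurableSet.univ]⟩

lemma maxLawMix_Iio [SigmaFinite ν] (p : PMF ℕ) {x : ℝ} (hx : 0 < x) :
    maxLawMix ν p (Set.Iio x) = p.pgf (ν (Set.Iio x)) := by
  simp [maxLawMix_apply p measurableSet_Iio, maxLaw_Iio _ hx, PMF.pgf]

end maxLawMix

lemma MeasureTheory.Measure.ext_of_Ioi_of_Iio_zero {μ μ' : Measure ℝ} [IsProbabilityMeasure μ]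
    [IsProbabilityMeasure μ'] (hμ : μ (Set.Iio 0) = 0) (hμ' : μ' (Set.Iio 0) = 0)
    (h : ∀ t, 0 ≤ t → μ (Set.Ioi t) = μ' (Set.Ioi t)) : μ = μ' := by
  refine Measure.ext_of_Iic μ μ' fun a => ?_
  rcases lt_or_ge a 0 with ha | ha
  · rw [measure_mono_null (Set.Iic_subset_Iio.mpr ha) hμ,
      measure_mono_null (Set.Iic_subset_Iio.mpr ha) hμ']
  · rw [← Set.compl_Ioi, prob_compl_eq_one_sub measurableSet_Ioi,
      prob_compl_eq_one_sub measurableSet_Ioi, h a ha]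

section Recursion

variable {ν : Measure ℝ} {r : ℕ}

lemma map_bonus_prod_Ioi [SFinite ν] (η : Measure ℝ) [SigmaFinite η] {t : ℝ} (ht : 0 ≤ t) :
    ((Measure.pi fun _ : Fin r => η).prod ν).map (fun q => bonus q.2 q.1) (Set.Ioi t) =
      ∫⁻ x in Set.Ioi t, η (Set.Iio x) ^ r ∂ν := by
  rw [Measure.map_apply measurable_bonus measurableSet_Ioi,
    Measure.prod_apply_symm (measurable_bonus measurableSet_Ioi),
    ← lintegral_indicator measurableSet_Ioi]
  congr with x
  have fiber : (·, x) ⁻¹' ((fun q : (Fin r → ℝ) × ℝ => bonus q.2 q.1) ⁻¹' Set.Ioi t) =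
      {_s | t < x} ∩ Set.univ.pi fun _ => Set.Iio x := by
    ext s
    simp only [Set.mem_preimage, Set.mem_Ioi, Set.mem_inter_iff, Set.mem_univ_pi, Set.mem_Iio,
      bonus]
    by_cases hx : t < x
    · rw [← fmax_lt_iff s (ht.trans_lt hx)]
      split_ifs <;> simp [*]
    · split_ifs <;> simp [*]
  rw [fiber]
  by_cases hx : t < x <;> simp [hx, Measure.pi_pi]

variable [IsProbabilityMeasure ν] [NullSingletonClass ν]

theorem map_bonus_pi_maxLawMix (p : PMF ℕ) :
    ((Measure.pi fun _ : Fin r => maxLawMix ν p).prod ν).map (fun q => bonus q.2 q.1) =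
      maxLawMix ν ((conv r p).bind Bstep) := by
  have : IsProbabilityMeasure (((Measure.pi fun _ : Fin r => maxLawMix ν p).prod ν).map
      fun q => bonus q.2 q.1) := Measure.isProbabilityMeasure_map measurable_bonus.aemeasurable
  have hF : Measurable fun x : ℝ => ν (Set.Iio x) :=
    Monotone.measurable fun a b hab => measure_mono (Set.Iio_subset_Iio hab)
  refine Measure.ext_of_Ioi_of_Iio_zero ?_ (maxLawMix_Iio_zero _) fun t ht => ?_
  · rw [Measure.map_apply measurable_bonus measurableSet_Iio]
    convert measure_empty (μ := (Measure.pi fun _ : Fin r => maxLawMix ν p).prod ν)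
    ext q
    simpa using bonus_nonneg q.2 q.1
  rw [map_bonus_prod_Ioi _ ht,
    maxLawMix_bind_Bstep_apply _ measurableSet_Ioi (by simp [maxLaw_zero, ht])]
  calc ∫⁻ x in Set.Ioi t, maxLawMix ν p (Set.Iio x) ^ r ∂ν
      = ∫⁻ x in Set.Ioi t, ∑' n, conv r p n * ν (Set.Iio x) ^ n ∂ν := by
        refine setLIntegral_congr_fun measurableSet_Ioi fun x hx => ?_
        rw [maxLawMix_Iio p (ht.trans_lt hx), ← PMF.pgf_conv, PMF.pgf]
    _ = ∑' n, conv r p n * ∫⁻ x in Set.Ioi t, ν (Set.Iio x) ^ n ∂ν := by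
        rw [lintegral_tsum fun n => ((hF.pow_const n).const_mul _).aemeasurable]
        simp_rw [lintegral_const_mul _ (hF.pow_const _)]
    _ = _ := by
        refine tsum_congr fun n => ?_
        rw [maxLaw_succ_Ioi ht, ← mul_assoc ((n : ℝ≥0∞) + 1)⁻¹,
          ENNReal.inv_mul_cancel (by simp) (by simp), one_mul]

end Recursion

/-- If the nodes of `T(r,d)` are weighted i.i.d. from a continuous distribution `ν` on
`[0,∞)`, then the bonus `S(0)` of the root is distributed as `W^{<X_{d,r}>}`: its law is the
mixture over `k` of `P(X_{d,r} = k)` times the law of the maximum of `k` i.i.d. samples. -/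
theorem root_bonus_distribution (r d : ℕ) (ν : Measure ℝ)
    [IsProbabilityMeasure ν] [NullSingletonClass ν] (hsupp : ν (Set.Iio 0) = 0) :
    Measure.map (fun w : TreeNode r d → ℝ => Sfun r d w ⟨[], by simp⟩)
        (Measure.pi fun _ : TreeNode r d => ν) =
      Measure.sum fun k : ℕ => Xd d r k • maxLaw ν k := by
  change (Measure.pi fun _ => ν).map (fun w => Sfun r d w (root r d)) = maxLawMix ν (Xd d r)
  induction d with
  | zero =>
    have : (fun w : TreeNode r 0 → ℝ => Sfun r 0 w (root r 0)) = Function.eval (root r 0) :=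
      funext fun w => Sfun_of_length_eq w rfl
    rw [this, (measurePreserving_eval _ _).map_eq, Xd, maxLawMix_pure, maxLaw_one hsupp]
  | succ d ih =>
    rw [map_Sfun_root_succ, ih]
    exact map_bonus_pi_maxLawMix (Xd d r)
end

section
/- For every k ≥ 0 and r ≥ 2, the limits lim_{d→∞} P(X_{d,r} = k) and lim_{d→∞} P(Y_{d,r} = k) exist, and the limiting values define probability distributions of random variables X_{∞,r} and Y_{∞,r} (i.e., the limiting probabilities sum to 1 over k). -/
open scoped ENNReal

/-- The sequence `Y_{d,r}`: `Y_{0,r} = 0` and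
`Y_{d,r} = ((Y_{d-1,r} + 1)·B(Y_{d-1,r} + 1))^{(r)}`. -/
noncomputable def Yd : ℕ → ℕ → PMF ℕ
  | 0, _ => PMF.pure 0
  | d + 1, r => conv r ((Yd d r).bind Bstep)

/-!
Let `G_p(z) = ∑ₖ p(k) zᵏ` be the generating function of a law `p` on `ℕ`; on the closed unit disc
all of them are bounded by `1`. The recursion reads `G_{Y_{d+1}} = G_{X_d} ^ r` and
`G_{X_{d+1}}(z) = 1 + ∫_{[1, z]} G_{Y_{d+1}}`, so `G_{X_d}` is the Picard iteration for
`G' = G ^ r`, `G(1) = 1`, and consecutive iterates differ by `O((r ‖z - 1‖) ^ d / d!)` on the disc.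
Cauchy's estimate on the circle of radius `1/2` makes the differences of each probability summable
in `d`, so the limits exist. Since `E X_d = 1` and `E Y_d ≤ r`, Markov's inequality shows that no
mass escapes to infinity, hence the limits sum to `1`.
-/

open Filter Finset Topology
open scoped NNReal Real

namespace PMF

lemma map_const_add_apply (p : PMF ℕ) (a k : ℕ) :
    (p.map (a + ·)) k = if a ≤ k then p (k - a) else 0 := by
  rw [map_apply]
  split_ifs with h
  · rw [tsum_eq_single (k - a) (by intro b hb; exact if_neg (by omega))]
    exact if_pos (by omega)
  · exact ENNReal.tsum_eq_zero.mpr fun b => if_neg (by omega)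

noncomputable def mean (p : PMF ℕ) : ℝ≥0∞ := ∑' k, p k * k

lemma mean_pure (a : ℕ) : (pure a).mean = a := by
  rw [mean, tsum_eq_single a fun b hb => by simp [pure_apply, hb]]
  simp

lemma mean_bind {α : Type*} (p : PMF α) (f : α → PMF ℕ) :
    (p.bind f).mean = ∑' a, p a * (f a).mean := by
  simp only [mean, bind_apply, ← ENNReal.tsum_mul_left, ← ENNReal.tsum_mul_right]
  rw [ENNReal.tsum_comm]
  exact tsum_congr fun a => tsum_congr fun k => mul_assoc _ _ _

lemma mean_map {α : Type*} (p : PMF α) (f : α → ℕ) : (p.map f).mean = ∑' a, p a * f a := by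
  simp [← bind_pure_comp, mean_bind, mean_pure]

lemma mean_map_const_add (p : PMF ℕ) (a : ℕ) : (p.map (a + ·)).mean = a + p.mean := by
  rw [mean_map, mean]
  simp only [Nat.cast_add, mul_add, ENNReal.tsum_add, ENNReal.tsum_mul_right, tsum_coe, one_mul]

/-- Markov's inequality. -/
lemma one_le_sum_range_add_mean_div (p : PMF ℕ) {K : ℕ} (hK : K ≠ 0) :
    1 ≤ ∑ k ∈ range K, p k + p.mean / K := by
  calc 1 = ∑' k, p k := p.tsum_coe.symm
    _ ≤ ∑' k, ((range K : Set ℕ).indicator p k + p k * k / K) := ENNReal.tsum_le_tsum fun k => by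
        by_cases hk : k < K
        · simp [hk]
        · refine le_add_left ((ENNReal.le_div_iff_mul_le (by simp [hK]) (by simp)).mpr ?_)
          gcongr
          exact_mod_cast not_lt.mp hk
    _ = ∑ k ∈ range K, p k + p.mean / K := by
        simp only [ENNReal.tsum_add, ← sum_eq_tsum_indicator, mean, div_eq_mul_inv,
          ENNReal.tsum_mul_right]

theorem tsum_eq_one_of_tendsto_of_mean_le {ι : Type*} {l : Filter ι} [l.NeBot] {p : ι → PMF ℕ}
    {L : ℕ → ℝ≥0∞} {m : ℝ≥0∞} (hm : m ≠ ⊤) (hmean : ∀ i, (p i).mean ≤ m)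
    (hL : ∀ k, Tendsto (fun i => p i k) l (𝓝 (L k))) : ∑' k, L k = 1 := by
  have hsum (K : ℕ) : Tendsto (fun i => ∑ k ∈ range K, p i k) l (𝓝 (∑ k ∈ range K, L k)) :=
    tendsto_finsetSum _ fun k _ => hL k
  refine le_antisymm (ENNReal.tsum_le_of_sum_range_le fun K => ?_) ?_
  · exact le_of_tendsto' (hsum K) fun i => (ENNReal.sum_le_tsum _).trans (p i).tsum_coe.le
  have hlower (K : ℕ) (hK : K ≠ 0) : 1 ≤ ∑' k, L k + m / K := by
    refine ge_of_tendsto ((hsum K).add_const _) (Eventually.of_forall fun i => ?_)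
      |>.trans (by gcongr; exact ENNReal.sum_le_tsum _)
    exact ((p i).one_le_sum_range_add_mean_div hK).trans (by gcongr; exact hmean i)
  have hlim : Tendsto (fun K : ℕ => ∑' k, L k + m / K) atTop (𝓝 (∑' k, L k)) := by
    simpa using tendsto_const_nhds.add (ENNReal.Tendsto.const_div ENNReal.tendsto_nat_nhds_top
      (Or.inr hm))
  exact ge_of_tendsto hlim ((eventually_ne_atTop 0).mono hlower)

end PMF

lemma Bstep_apply_succ (j k : ℕ) :
    Bstep j (k + 1) = if j = k then ((k : ℝ≥0∞) + 1)⁻¹ else 0 := by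
  rcases eq_or_ne j k with rfl | h
  · simp [Bstep, PMF.map_apply, PMF.bernoulli_apply]
  · simp [Bstep, PMF.map_apply, h, Ne.symm h]

lemma Bstep_zero : Bstep 0 = PMF.pure 1 := by
  ext k
  rcases k with _ | _ | k <;> simp [Bstep, PMF.map_apply, PMF.bernoulli_apply]

lemma bind_Bstep_apply_succ (p : PMF ℕ) (k : ℕ) :
    (p.bind Bstep) (k + 1) = ((k : ℝ≥0∞) + 1)⁻¹ * p k := by
  rw [PMF.bind_apply, tsum_eq_single k fun j hj => by simp [Bstep_apply_succ, hj]]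
  simp [Bstep_apply_succ, mul_comm]

lemma Xd_eq_bind_Bstep (d r : ℕ) : Xd d r = (Yd d r).bind Bstep := by
  induction d with
  | zero => simp [Xd, Yd, Bstep_zero]
  | succ d ih => simp only [Xd, Yd, ih]

lemma Yd_succ (d r : ℕ) : Yd (d + 1) r = conv r (Xd d r) := by
  rw [Xd_eq_bind_Bstep, Yd]

lemma conv_succ_apply (n : ℕ) (p : PMF ℕ) (k : ℕ) :
    conv (n + 1) p k = ∑ ij ∈ antidiagonal k, conv n p ij.1 * p ij.2 := by
  rw [conv, PMF.bind_apply, Nat.sum_antidiagonal_eq_sum_range_succ (fun i j => conv n p i * p j),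
    tsum_eq_sum (s := range (k + 1)) fun a ha => by
      rw [PMF.map_const_add_apply, if_neg (by simpa [Nat.lt_succ_iff] using ha), mul_zero]]
  refine sum_congr rfl fun a ha => ?_
  rw [PMF.map_const_add_apply, if_pos (by simpa [Nat.lt_succ_iff] using ha)]

lemma mean_conv (n : ℕ) (p : PMF ℕ) : (conv n p).mean = n * p.mean := by
  induction n with
  | zero => simp [conv, PMF.mean_pure]
  | succ n ih =>
    rw [conv, PMF.mean_bind]
    simp only [PMF.mean_map_const_add, mul_add, ENNReal.tsum_add, ENNReal.tsum_mul_right,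
      PMF.tsum_coe, one_mul]
    rw [← PMF.mean, ih]
    push_cast
    ring

lemma mean_Bstep (j : ℕ) : (Bstep j).mean = 1 := by
  simpa [Bstep, PMF.mean_map, PMF.bernoulli_apply] using ENNReal.inv_mul_cancel (by simp) (by simp)

lemma mean_Xd (d r : ℕ) : (Xd d r).mean = 1 := by
  simp [Xd_eq_bind_Bstep, PMF.mean_bind, mean_Bstep]

lemma mean_Yd_le (d r : ℕ) : (Yd d r).mean ≤ r := by
  cases d with
  | zero => simp [Yd, PMF.mean_pure]
  | succ d => rw [Yd_succ, mean_conv, mean_Xd, mul_one]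

lemma norm_pow_sub_pow_le {R : Type*} [NormedCommRing R] [NormOneClass R] {a b : R}
    (ha : ‖a‖ ≤ 1) (hb : ‖b‖ ≤ 1) (n : ℕ) : ‖a ^ n - b ^ n‖ ≤ n * ‖a - b‖ := by
  rw [← geom_sum₂_mul]
  refine (norm_mul_le _ _).trans (mul_le_mul_of_nonneg_right ?_ (norm_nonneg _))
  calc ‖∑ i ∈ range n, a ^ i * b ^ (n - 1 - i)‖
      ≤ ∑ i ∈ range n, ‖a ^ i * b ^ (n - 1 - i)‖ := norm_sum_le _ _
    _ ≤ ∑ i ∈ range n, (1 : ℝ) := sum_le_sum fun i _ => (norm_mul_le _ _).trans <| mul_le_one₀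
        ((norm_pow_le _ _).trans (pow_le_one₀ (norm_nonneg _) ha)) (norm_nonneg _)
        ((norm_pow_le _ _).trans (pow_le_one₀ (norm_nonneg _) hb))
    _ = n := by simp

lemma norm_one_add_mul_sub_one_le_one {z : ℂ} (hz : ‖z‖ ≤ 1) {u : ℝ} (hu : u ∈ Set.Icc 0 1) :
    ‖1 + u * (z - 1)‖ ≤ 1 := by
  simpa [Complex.real_smul] using (convex_closedBall (0 : ℂ) 1).add_smul_sub_mem
    (by simp) (mem_closedBall_zero_iff.mpr hz) hu

lemma mul_integral_one_add_mul_pow (w : ℂ) (k : ℕ) :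
    w * ∫ u in (0 : ℝ)..1, (1 + u * w) ^ k = ((1 + w) ^ (k + 1) - 1) / (k + 1) := by
  have hderiv (u : ℝ) : HasDerivAt (fun u : ℝ => (1 + u * w) ^ (k + 1))
      ((k + 1) * (w * (1 + u * w) ^ k)) u := by
    have h : HasDerivAt (fun x : ℂ => (1 + x * w) ^ (k + 1))
        ((k + 1) * (w * (1 + u * w) ^ k)) u := by
      refine ((((hasDerivAt_id (u : ℂ)).mul_const w).const_add 1).fun_pow (k + 1)).congr_deriv ?_
      simp only [id]
      push_cast
      ring
    exact h.comp_ofReal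
  have hftc := intervalIntegral.integral_eq_sub_of_hasDerivAt (fun u _ => hderiv u)
    (Continuous.intervalIntegrable (by fun_prop) 0 1)
  rw [intervalIntegral.integral_const_mul, intervalIntegral.integral_const_mul] at hftc
  rw [eq_div_iff (by exact_mod_cast Nat.succ_ne_zero k), mul_comm, hftc]
  simp

/-- The Picard-iteration step behind the factorial rate of convergence. -/
lemma norm_mul_integral_segment_le {f : ℂ → ℂ} {C : ℝ} {n : ℕ}
    (hf : ∀ w : ℂ, ‖w‖ ≤ 1 → ‖f w‖ ≤ C * ‖w - 1‖ ^ n) {z : ℂ} (hz : ‖z‖ ≤ 1) :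
    ‖(z - 1) * ∫ u in (0 : ℝ)..1, f (1 + u * (z - 1))‖ ≤ C * ‖z - 1‖ ^ (n + 1) / (n + 1) := by
  have hbound : ∀ᵐ u : ℝ, u ∈ Set.Ioc 0 1 →
      ‖f (1 + u * (z - 1))‖ ≤ C * ‖z - 1‖ ^ n * u ^ n := by
    refine Eventually.of_forall fun u hu => ?_
    have hu' : u ∈ Set.Icc (0 : ℝ) 1 := Set.Ioc_subset_Icc_self hu
    calc ‖f (1 + u * (z - 1))‖ ≤ C * ‖1 + u * (z - 1) - 1‖ ^ n :=
          hf _ (norm_one_add_mul_sub_one_le_one hz hu')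
      _ = C * ‖z - 1‖ ^ n * u ^ n := by
          rw [add_sub_cancel_left, norm_mul, Complex.norm_real, Real.norm_of_nonneg hu'.1]
          ring
  have hint := intervalIntegral.norm_integral_le_of_norm_le zero_le_one hbound
    (Continuous.intervalIntegrable (by fun_prop) 0 1)
  rw [intervalIntegral.integral_const_mul, integral_pow] at hint
  rw [norm_mul]
  calc ‖z - 1‖ * ‖∫ u in (0 : ℝ)..1, f (1 + u * (z - 1))‖
      ≤ ‖z - 1‖ * (C * ‖z - 1‖ ^ n * ((1 ^ (n + 1) - 0 ^ (n + 1)) / (n + 1))) := by gcongr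
    _ = C * ‖z - 1‖ ^ (n + 1) / (n + 1) := by simp; ring

open FormalMultilinearSeries in
lemma norm_coeff_le_of_norm_tsum_le {c : ℕ → ℂ} (hc : Summable fun n => ‖c n‖) {R : ℝ≥0}
    (hR0 : 0 < R) (hR1 : R < 1) {ε : ℝ} (h : ∀ z : ℂ, ‖z‖ = R → ‖∑' n, c n * z ^ n‖ ≤ ε)
    (n : ℕ) : ‖c n‖ ≤ ε / R ^ n := by
  set p := ofScalars ℂ c
  have hrad : ((1 : ℝ≥0) : ℝ≥0∞) ≤ p.radius :=
    p.le_radius_of_summable (by simpa [p] using hc)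
  have hp := p.hasFPowerSeriesOnBall (zero_lt_one.trans_le hrad)
  have hsum (z : ℂ) : p.sum z = ∑' n, c n * z ^ n := by
    change ofScalarsSum c z = _
    simp [ofScalarsSum_eq_tsum]
  have hdiff : DifferentiableOn ℂ p.sum (Metric.closedBall 0 R) := by
    refine hp.differentiableOn.mono fun z hz => ?_
    rw [Metric.mem_eball, edist_zero_right]
    refine lt_of_lt_of_le ?_ hrad
    exact_mod_cast (mem_closedBall_zero_iff.mp hz).trans_lt hR1
  have hcauchy : cauchyPowerSeries p.sum 0 R = p :=
    (hdiff.hasFPowerSeriesOnBall hR0).hasFPowerSeriesAt.eq_formalMultilinearSeries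
      hp.hasFPowerSeriesAt
  have hint : ∫ θ in (0 : ℝ)..2 * π, ‖p.sum (circleMap 0 R θ)‖ ≤ ε * (2 * π) := by
    have hbound : ∀ θ ∈ Set.uIoc 0 (2 * π), ‖‖p.sum (circleMap 0 R θ)‖‖ ≤ ε := fun θ _ => by
      rw [norm_norm, hsum]
      exact h _ (by simp)
    refine (Real.le_norm_self _).trans ?_
    simpa [abs_of_pos Real.pi_pos] using intervalIntegral.norm_integral_le_of_norm_le_const hbound
  calc ‖c n‖ = ‖cauchyPowerSeries p.sum 0 R n‖ := by rw [hcauchy, ofScalars_norm]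
    _ ≤ ((2 * π)⁻¹ * ∫ θ in (0 : ℝ)..2 * π, ‖p.sum (circleMap 0 R θ)‖) * |(R : ℝ)|⁻¹ ^ n :=
        norm_cauchyPowerSeries_le _ _ _ _
    _ ≤ ((2 * π)⁻¹ * (ε * (2 * π))) * |(R : ℝ)|⁻¹ ^ n := by gcongr
    _ = ε / R ^ n := by
        rw [NNReal.abs_eq, inv_pow]
        field_simp

namespace PMF

noncomputable def gf (p : PMF ℕ) (z : ℂ) : ℂ := ∑' k, ((p k).toReal : ℂ) * z ^ k

section

variable (p : PMF ℕ) {z : ℂ}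

lemma summable_toReal : Summable fun k => (p k).toReal :=
  ENNReal.summable_toReal p.tsum_coe_ne_top

lemma tsum_toReal : ∑' k, (p k).toReal = 1 := by
  rw [← ENNReal.tsum_toReal_eq p.apply_ne_top, p.tsum_coe, ENNReal.toReal_one]

lemma norm_gf_term_le (hz : ‖z‖ ≤ 1) (k : ℕ) : ‖((p k).toReal : ℂ) * z ^ k‖ ≤ (p k).toReal := by
  rw [norm_mul, norm_pow, Complex.norm_real, Real.norm_of_nonneg ENNReal.toReal_nonneg]
  exact mul_le_of_le_one_right ENNReal.toReal_nonneg (pow_le_one₀ (norm_nonneg _) hz)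

lemma summable_norm_gf_term (hz : ‖z‖ ≤ 1) :
    Summable fun k => ‖((p k).toReal : ℂ) * z ^ k‖ :=
  p.summable_toReal.of_nonneg_of_le (fun _ => norm_nonneg _) (p.norm_gf_term_le hz)

lemma norm_gf_le_one (hz : ‖z‖ ≤ 1) : ‖p.gf z‖ ≤ 1 :=
  calc ‖p.gf z‖ ≤ ∑' k, ‖((p k).toReal : ℂ) * z ^ k‖ :=
        norm_tsum_le_tsum_norm (p.summable_norm_gf_term hz)
    _ ≤ ∑' k, (p k).toReal :=
        (p.summable_norm_gf_term hz).tsum_le_tsum (p.norm_gf_term_le hz) p.summable_toReal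
    _ = 1 := p.tsum_toReal

lemma continuousOn_gf : ContinuousOn p.gf (Metric.closedBall 0 1) :=
  continuousOn_tsum (fun k => by fun_prop) p.summable_toReal
    fun k _ hz => p.norm_gf_term_le (mem_closedBall_zero_iff.mp hz) k

lemma gf_one : p.gf 1 = 1 := by
  simp [gf, ← Complex.ofReal_tsum, p.tsum_toReal]

lemma gf_eq_one_add (hz : ‖z‖ ≤ 1) :
    p.gf z = 1 + ∑' k, ((p (k + 1)).toReal : ℂ) * (z ^ (k + 1) - 1) := by
  have hsub := (p.summable_norm_gf_term hz).of_norm.hasSum.sub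
    (p.summable_norm_gf_term (z := 1) (by simp)).of_norm.hasSum
  change HasSum _ (p.gf z - p.gf 1) at hsub
  simp only [← mul_sub, one_pow, gf_one] at hsub
  have := ((hasSum_nat_add_iff' 1).mpr hsub).tsum_eq
  simp only [range_one, sum_singleton, pow_zero, sub_self, mul_zero, sub_zero] at this
  rw [this]
  ring

lemma intervalIntegrable_gf_segment (hz : ‖z‖ ≤ 1) :
    IntervalIntegrable (fun u : ℝ => p.gf (1 + u * (z - 1))) MeasureTheory.volume 0 1 := by
  refine ContinuousOn.intervalIntegrable (p.continuousOn_gf.comp (by fun_prop) fun u hu => ?_)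
  rw [Set.uIcc_of_le zero_le_one] at hu
  exact mem_closedBall_zero_iff.mpr (norm_one_add_mul_sub_one_le_one hz hu)

end

theorem exists_tendsto_apply_of_norm_gf_sub_le {p : ℕ → PMF ℕ} {b : ℕ → ℝ} (hb : Summable b)
    (h : ∀ d (z : ℂ), ‖z‖ ≤ 1 → ‖(p (d + 1)).gf z - (p d).gf z‖ ≤ b d) (k : ℕ) :
    ∃ L, Tendsto (fun d => p d k) atTop (𝓝 L) := by
  have hstep (d : ℕ) : dist (p d k).toReal (p (d + 1) k).toReal ≤ 2 ^ k * b d := by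
    set c : ℕ → ℂ := fun n => ((p (d + 1) n).toReal : ℂ) - (p d n).toReal
    have hc : Summable fun n => ‖c n‖ :=
      ((p (d + 1)).summable_toReal.add (p d).summable_toReal).of_nonneg_of_le
        (fun _ => norm_nonneg _) fun n => (norm_sub_le _ _).trans_eq (by simp)
    have hgf (z : ℂ) (hz : ‖z‖ ≤ 1) : ∑' n, c n * z ^ n = (p (d + 1)).gf z - (p d).gf z := by
      simp only [c, sub_mul]
      exact ((p (d + 1)).summable_norm_gf_term hz).of_norm.tsum_sub
        ((p d).summable_norm_gf_term hz).of_norm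
    have := norm_coeff_le_of_norm_tsum_le hc (R := 2⁻¹) (by norm_num) (by norm_num)
      (fun z hz => (hgf z (by rw [hz]; norm_num)).symm ▸ h d z (by rw [hz]; norm_num)) k
    rw [dist_comm, Real.dist_eq]
    simpa [c, ← Complex.ofReal_sub, div_eq_mul_inv, mul_comm] using this
  obtain ⟨L, hL⟩ :=
    cauchySeq_tendsto_of_complete (cauchySeq_of_dist_le_of_summable _ hstep (hb.mul_left _))
  exact ⟨ENNReal.ofReal L,
    (ENNReal.tendsto_ofReal hL).congr fun d => ENNReal.ofReal_toReal ((p d).apply_ne_top k)⟩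

end PMF

lemma gf_conv (n : ℕ) (p : PMF ℕ) {z : ℂ} (hz : ‖z‖ ≤ 1) : (conv n p).gf z = p.gf z ^ n := by
  induction n with
  | zero =>
    rw [conv, PMF.gf, tsum_eq_single 0 fun k hk => by simp [PMF.pure_apply, hk]]
    simp
  | succ n ih =>
    rw [pow_succ, ← ih, PMF.gf, PMF.gf, PMF.gf,
      tsum_mul_tsum_eq_tsum_sum_antidiagonal_of_summable_norm
        ((conv n p).summable_norm_gf_term hz) (p.summable_norm_gf_term hz)]
    refine tsum_congr fun k => ?_
    rw [conv_succ_apply, ENNReal.toReal_sum fun ij _ => ENNReal.mul_ne_top (PMF.apply_ne_top _ _)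
      (p.apply_ne_top _), Complex.ofReal_sum, sum_mul]
    refine sum_congr rfl fun ij hij => ?_
    rw [← mem_antidiagonal.mp hij, pow_add, ENNReal.toReal_mul, Complex.ofReal_mul]
    ring

lemma gf_bind_Bstep (p : PMF ℕ) {z : ℂ} (hz : ‖z‖ ≤ 1) :
    (p.bind Bstep).gf z = 1 + (z - 1) * ∫ u in (0 : ℝ)..1, p.gf (1 + u * (z - 1)) := by
  have hterm (k : ℕ) : (((p.bind Bstep) (k + 1)).toReal : ℂ) * (z ^ (k + 1) - 1)
      = (z - 1) * ∫ u in (0 : ℝ)..1, ((p k).toReal : ℂ) * (1 + u * (z - 1)) ^ k := by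
    rw [intervalIntegral.integral_const_mul, mul_left_comm, mul_integral_one_add_mul_pow,
      add_sub_cancel, bind_Bstep_apply_succ, ENNReal.toReal_mul, ENNReal.toReal_inv]
    norm_num [ENNReal.toReal_add]
    ring
  have hseg (u : ℝ) (hu : u ∈ Set.uIoc 0 1) : ‖1 + u * (z - 1)‖ ≤ 1 := by
    rw [Set.uIoc_of_le zero_le_one] at hu
    exact norm_one_add_mul_sub_one_le_one hz (Set.Ioc_subset_Icc_self hu)
  have hswap : HasSum (fun k => ∫ u in (0 : ℝ)..1, ((p k).toReal : ℂ) * (1 + u * (z - 1)) ^ k)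
      (∫ u in (0 : ℝ)..1, p.gf (1 + u * (z - 1))) := by
    refine intervalIntegral.hasSum_integral_of_dominated_convergence (fun k _ => (p k).toReal)
      (fun k => (by fun_prop : Continuous _).aestronglyMeasurable) (fun k => ?_)
      (Eventually.of_forall fun _ _ => p.summable_toReal) intervalIntegrable_const
      (Eventually.of_forall fun u hu => ?_)
    · exact Eventually.of_forall fun u hu => p.norm_gf_term_le (hseg u hu) k
    · exact (p.summable_norm_gf_term (hseg u hu)).of_norm.hasSum
  rw [(p.bind Bstep).gf_eq_one_add hz, tsum_congr hterm, tsum_mul_left, hswap.tsum_eq]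

lemma norm_gf_bind_Bstep_sub_le {p q : PMF ℕ} {C : ℝ} {n : ℕ}
    (h : ∀ w : ℂ, ‖w‖ ≤ 1 → ‖p.gf w - q.gf w‖ ≤ C * ‖w - 1‖ ^ n) {z : ℂ} (hz : ‖z‖ ≤ 1) :
    ‖(p.bind Bstep).gf z - (q.bind Bstep).gf z‖ ≤ C * ‖z - 1‖ ^ (n + 1) / (n + 1) := by
  rw [gf_bind_Bstep p hz, gf_bind_Bstep q hz, add_sub_add_left_eq_sub, ← mul_sub,
    ← intervalIntegral.integral_sub (p.intervalIntegrable_gf_segment hz)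
      (q.intervalIntegrable_gf_segment hz)]
  exact norm_mul_integral_segment_le (f := fun w => p.gf w - q.gf w) h hz

theorem norm_gf_Yd_succ_sub_le (r d : ℕ) {z : ℂ} (hz : ‖z‖ ≤ 1) :
    ‖(Yd (d + 1) r).gf z - (Yd d r).gf z‖ ≤ 2 * r ^ d / d.factorial * ‖z - 1‖ ^ d := by
  induction d generalizing z with
  | zero =>
    simpa [one_add_one_eq_two] using (norm_sub_le _ _).trans
      (add_le_add ((Yd 1 r).norm_gf_le_one hz) ((Yd 0 r).norm_gf_le_one hz))
  | succ d ih =>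
    rw [Yd_succ, Yd_succ, gf_conv r _ hz, gf_conv r _ hz, Xd_eq_bind_Bstep, Xd_eq_bind_Bstep]
    refine (norm_pow_sub_pow_le (PMF.norm_gf_le_one _ hz) (PMF.norm_gf_le_one _ hz) r).trans ?_
    calc r * ‖((Yd (d + 1) r).bind Bstep).gf z - ((Yd d r).bind Bstep).gf z‖
        ≤ r * (2 * r ^ d / d.factorial * ‖z - 1‖ ^ (d + 1) / (d + 1)) := by
          gcongr
          exact norm_gf_bind_Bstep_sub_le (fun w hw => ih hw) hz
      _ = 2 * r ^ (d + 1) / (d + 1).factorial * ‖z - 1‖ ^ (d + 1) := by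
          rw [Nat.factorial_succ]
          push_cast
          field_simp
          ring

theorem norm_gf_Xd_succ_sub_le (r d : ℕ) {z : ℂ} (hz : ‖z‖ ≤ 1) :
    ‖(Xd (d + 1) r).gf z - (Xd d r).gf z‖
      ≤ 2 * r ^ d / d.factorial * ‖z - 1‖ ^ (d + 1) / (d + 1) := by
  rw [Xd_eq_bind_Bstep, Xd_eq_bind_Bstep]
  exact norm_gf_bind_Bstep_sub_le (fun w hw => norm_gf_Yd_succ_sub_le r d hw) hz

lemma norm_gf_Xd_Yd_succ_sub_le (r d : ℕ) {z : ℂ} (hz : ‖z‖ ≤ 1) :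
    ‖(Xd (d + 1) r).gf z - (Xd d r).gf z‖ ≤ 4 * (2 * r : ℝ) ^ d / d.factorial ∧
      ‖(Yd (d + 1) r).gf z - (Yd d r).gf z‖ ≤ 4 * (2 * r : ℝ) ^ d / d.factorial := by
  have hz2 : ‖z - 1‖ ≤ 2 := (norm_sub_le _ _).trans (by rw [norm_one]; linarith)
  constructor
  · calc _ ≤ 2 * r ^ d / d.factorial * ‖z - 1‖ ^ (d + 1) / (d + 1) := norm_gf_Xd_succ_sub_le r d hz
      _ ≤ 2 * r ^ d / d.factorial * 2 ^ (d + 1) / 1 := by gcongr; simp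
      _ = 4 * (2 * r : ℝ) ^ d / d.factorial := by ring
  · calc _ ≤ 2 * r ^ d / d.factorial * ‖z - 1‖ ^ d := norm_gf_Yd_succ_sub_le r d hz
      _ ≤ 2 * r ^ d / d.factorial * 2 ^ d := by gcongr
      _ ≤ 4 * (2 * r : ℝ) ^ d / d.factorial := by
          rw [mul_pow]
          ring_nf
          gcongr
          norm_num

theorem limits_Xd_Yd_general (r : ℕ) :
    ∃ pX pY : ℕ → ℝ≥0∞,
      (∀ k, Tendsto (fun d => Xd d r k) atTop (nhds (pX k))) ∧ (∑' k, pX k) = 1 ∧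
      (∀ k, Tendsto (fun d => Yd d r k) atTop (nhds (pY k))) ∧ (∑' k, pY k) = 1 := by
  have hb : Summable fun d : ℕ => 4 * (2 * r : ℝ) ^ d / d.factorial := by
    simpa [mul_div_assoc] using (Real.summable_pow_div_factorial (2 * r)).mul_left 4
  choose pX hX using PMF.exists_tendsto_apply_of_norm_gf_sub_le (p := (Xd · r)) hb
    fun d _ hz => (norm_gf_Xd_Yd_succ_sub_le r d hz).1
  choose pY hY using PMF.exists_tendsto_apply_of_norm_gf_sub_le (p := (Yd · r)) hb
    fun d _ hz => (norm_gf_Xd_Yd_succ_sub_le r d hz).2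
  exact ⟨pX, pY, hX, PMF.tsum_eq_one_of_tendsto_of_mean_le (by simp) (fun d => (mean_Xd d r).le) hX,
    hY, PMF.tsum_eq_one_of_tendsto_of_mean_le (by simp) (mean_Yd_le · r) hY⟩

/-- For every `r ≥ 2` the limits `lim_d P(X_{d,r}=k)` and `lim_d P(Y_{d,r}=k)` exist for all
`k`, and the limiting values define probability distributions (they sum to `1`). -/
theorem limits_Xd_Yd (r : ℕ) (hr : 2 ≤ r) :
    ∃ pX pY : ℕ → ℝ≥0∞,
      (∀ k, Tendsto (fun d => Xd d r k) atTop (nhds (pX k))) ∧ (∑' k, pX k) = 1 ∧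
      (∀ k, Tendsto (fun d => Yd d r k) atTop (nhds (pY k))) ∧ (∑' k, pY k) = 1 :=
  limits_Xd_Yd_general r
end

section
/- The limiting random variable X_{∞,r} satisfies the distributional fixed-point equation X_{∞,r} =_D (X_{∞,r}^{(r)} + 1)·B(X_{∞,r}^{(r)} + 1), and Y_{∞,r} satisfies Y_{∞,r} =_D ((Y_{∞,r}+1)·B(Y_{∞,r}+1))^{(r)}. -/
open scoped ENNReal

open Filter

open Topology

/-! Both recursions iterate a map on `PMF ℕ` built from `bind` and convolution. Such maps
preserve pointwise convergence: by Scheffé's lemma pointwise convergence of probability mass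
functions is convergence in total variation, against which sums with weights in `[0, 1]` are
continuous. Hence a pointwise limit of the iteration is a fixed point. -/

section

variable {ι α β : Type*} {l : Filter ι} [l.IsCountablyGenerated]

theorem ENNReal.tendsto_tsum_of_dominated_convergence {F : ι → α → ℝ≥0∞} {f bound : α → ℝ≥0∞}
    (h_fin : ∑' a, bound a ≠ ∞) (h_bound : ∀ n a, F n a ≤ bound a)
    (h_lim : ∀ a, Tendsto (F · a) l (𝓝 (f a))) :
    Tendsto (fun n => ∑' a, F n a) l (𝓝 (∑' a, f a)) := by
  let _ : MeasurableSpace α := ⊤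
  have : DiscreteMeasurableSpace α := ⟨fun _ => trivial⟩
  simp only [← MeasureTheory.lintegral_count] at h_fin ⊢
  exact MeasureTheory.tendsto_lintegral_filter_of_dominated_convergence bound
    (.of_forall fun _ => .of_discrete) (.of_forall fun n => .of_forall (h_bound n)) h_fin
    (.of_forall h_lim)

theorem ENNReal.tsum_mul_le_tsum_mul_add_tsum_tsub (u v f : α → ℝ≥0∞) (hf : ∀ a, f a ≤ 1) :
    ∑' a, u a * f a ≤ ∑' a, v a * f a + ∑' a, (u a - v a) := by
  rw [← ENNReal.tsum_add]
  refine ENNReal.tsum_le_tsum fun a => ?_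
  calc u a * f a ≤ (v a + (u a - v a)) * f a := by gcongr; exact le_add_tsub
    _ = v a * f a + (u a - v a) * f a := add_mul _ _ _
    _ ≤ v a * f a + (u a - v a) := by gcongr; exact mul_le_of_le_one_right' (hf a)

namespace PMF

theorem tsum_tsub_comm (p q : PMF α) : ∑' a, (p a - q a) = ∑' a, (q a - p a) := by
  have hsum : ∑' a, q a + ∑' a, (p a - q a) = ∑' a, p a + ∑' a, (q a - p a) := by
    rw [← ENNReal.tsum_add, ← ENNReal.tsum_add]
    refine tsum_congr fun a => ?_
    rcases le_total (p a) (q a) with h | h <;>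
      rw [tsub_eq_zero_of_le h, add_zero, add_tsub_cancel_of_le h]
  rwa [p.tsum_coe, q.tsum_coe, ENNReal.add_right_inj ENNReal.one_ne_top] at hsum

theorem tendsto_tsum_tsub_of_tendsto {q : ι → PMF α} {p : PMF α}
    (hq : Tendsto (fun n => ⇑(q n)) l (𝓝 ⇑p)) :
    Tendsto (fun n => ∑' a, (p a - q n a)) l (𝓝 0) := by
  have h := ENNReal.tendsto_tsum_of_dominated_convergence p.tsum_coe_ne_top
    (fun n a => tsub_le_self) fun a =>
      ENNReal.Tendsto.sub tendsto_const_nhds (tendsto_pi_nhds.1 hq a) (.inl (p.apply_ne_top a))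
  simpa using h

theorem tendsto_bind {q : ι → PMF α} {p : PMF α} {f : ι → α → PMF β} {g : α → PMF β}
    (hq : Tendsto (fun n => ⇑(q n)) l (𝓝 ⇑p))
    (hf : ∀ a, Tendsto (fun n => ⇑(f n a)) l (𝓝 ⇑(g a))) :
    Tendsto (fun n => ⇑((q n).bind (f n))) l (𝓝 ⇑(p.bind g)) := by
  refine tendsto_pi_nhds.2 fun b => ?_
  simp only [bind_apply]
  set A := fun n => ∑' a, (p a - q n a)
  set C := fun n => ∑' a, p a * f n a b
  -- Scheffé: the sum is squeezed between `C n - A n` and `C n + A n`, and `A n → 0`.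
  have hA : Tendsto A l (𝓝 0) := tendsto_tsum_tsub_of_tendsto hq
  have hC : Tendsto C l (𝓝 (∑' a, p a * g a b)) :=
    ENNReal.tendsto_tsum_of_dominated_convergence p.tsum_coe_ne_top
      (fun n a => mul_le_of_le_one_right' ((f n a).coe_le_one b)) fun a =>
        ENNReal.Tendsto.const_mul (tendsto_pi_nhds.1 (hf a) b) (.inr (p.apply_ne_top a))
  have hle : ∀ n, ∑' a, q n a * f n a b ≤ C n + A n := fun n => by
    simpa only [A, tsum_tsub_comm p (q n)] using
      ENNReal.tsum_mul_le_tsum_mul_add_tsum_tsub _ _ _ fun a => (f n a).coe_le_one b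
  have hge : ∀ n, C n - A n ≤ ∑' a, q n a * f n a b := fun n =>
    tsub_le_iff_right.2 <| ENNReal.tsum_mul_le_tsum_mul_add_tsum_tsub _ _ _
      fun a => (f n a).coe_le_one b
  have hCne : ∑' a, p a * g a b ≠ ∞ := (p.bind g).apply_ne_top b
  refine tendsto_of_tendsto_of_tendsto_of_le_of_le ?_ ?_ hge hle
  · simpa using ENNReal.Tendsto.sub hC hA (.inl hCne)
  · simpa using hC.add hA

theorem tendsto_map {q : ι → PMF α} {p : PMF α} (hq : Tendsto (fun n => ⇑(q n)) l (𝓝 ⇑p))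
    (f : α → β) : Tendsto (fun n => ⇑((q n).map f)) l (𝓝 ⇑(p.map f)) :=
  tendsto_bind hq fun _ => tendsto_const_nhds

theorem eq_of_tendsto_of_succ_eq {T : PMF α → PMF α}
    (hT : ∀ (q : ℕ → PMF α) (p : PMF α), Tendsto (fun n => ⇑(q n)) atTop (𝓝 ⇑p) →
      Tendsto (fun n => ⇑(T (q n))) atTop (𝓝 ⇑(T p)))
    {x : ℕ → PMF α} {p : PMF α} (hlim : Tendsto (fun d => ⇑(x d)) atTop (𝓝 ⇑p))
    (hx : ∀ d, x (d + 1) = T (x d)) : p = T p := by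
  refine DFunLike.coe_injective (tendsto_nhds_unique ?_ (hT x p hlim))
  simpa only [Function.comp_def, hx] using hlim.comp (tendsto_add_atTop_nat 1)

end PMF

end

theorem tendsto_conv {ι : Type*} {l : Filter ι} [l.IsCountablyGenerated] (r : ℕ)
    {q : ι → PMF ℕ} {p : PMF ℕ} (hq : Tendsto (fun n => ⇑(q n)) l (𝓝 ⇑p)) :
    Tendsto (fun n => ⇑(conv r (q n))) l (𝓝 ⇑(conv r p)) := by
  induction r with
  | zero => exact tendsto_const_nhds
  | succ r ih => exact PMF.tendsto_bind ih fun a => PMF.tendsto_map hq (a + ·)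

theorem fixed_point_Xinf_Yinf_general (r : ℕ) :
    (∀ pX : PMF ℕ, (∀ k, Tendsto (fun d => Xd d r k) atTop (nhds (pX k))) →
      pX = (conv r pX).bind Bstep) ∧
    (∀ pY : PMF ℕ, (∀ k, Tendsto (fun d => Yd d r k) atTop (nhds (pY k))) →
      pY = conv r (pY.bind Bstep)) :=
  ⟨fun _ hX => PMF.eq_of_tendsto_of_succ_eq (T := fun q => (conv r q).bind Bstep)
      (fun _ _ hq => PMF.tendsto_bind (tendsto_conv r hq) fun _ => tendsto_const_nhds)
      (tendsto_pi_nhds.2 hX) fun _ => rfl,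
    fun _ hY => PMF.eq_of_tendsto_of_succ_eq (T := fun q => conv r (q.bind Bstep))
      (fun _ _ hq => tendsto_conv r (PMF.tendsto_bind hq fun _ => tendsto_const_nhds))
      (tendsto_pi_nhds.2 hY) fun _ => rfl⟩

/-- The limiting random variables `X_{∞,r}` and `Y_{∞,r}` satisfy the distributional
fixed-point equations `X_∞ =_D (X_∞^{(r)}+1)·B(X_∞^{(r)}+1)` and
`Y_∞ =_D ((Y_∞+1)·B(Y_∞+1))^{(r)}`. -/
theorem fixed_point_Xinf_Yinf (r : ℕ) (hr : 2 ≤ r) :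
    (∀ pX : PMF ℕ, (∀ k, Tendsto (fun d => Xd d r k) atTop (nhds (pX k))) →
      pX = (conv r pX).bind Bstep) ∧
    (∀ pY : PMF ℕ, (∀ k, Tendsto (fun d => Yd d r k) atTop (nhds (pY k))) →
      pY = conv r (pY.bind Bstep)) :=
  fixed_point_Xinf_Yinf_general r
end
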